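/- arXiv:1708.00064 — 8 statements merged into one kernel-verified Lean document; each statement's English description precedes it below -/
import Mathlib

section
/- Let G be a connected unicyclic graph (a connected graph whose number of edges equals its number of vertices) whose unique cycle has odd length (equivalently, G is not bipartite). Then for every matrix A ∈ S(G), at least one of the smallest eigenvalue and the largest eigenvalue of A is simple (has multiplicity 1). -/
open Matrix

/-- The geometric multiplicity of `lam` as an eigenvalue of `A`:
`dim ker (A - lam • I)`. -/
noncomputable def multOf {m : Type*} [Fintype m] [DecidableEq m]
    (A : Matrix m m ℝ) (lam : ℝ) : ℕ :=
  Module.finrank ℝ (LinearMap.ker (A - lam • (1 : Matrix m m ℝ)).mulVecLin)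

/-- The Strong Spectral Property. -/
def HasSSP {m : Type*} [Fintype m] [DecidableEq m] (A : Matrix m m ℝ) : Prop :=
  ∀ X : Matrix m m ℝ, X.IsSymm → Matrix.hadamard A X = 0 →
    Matrix.hadamard (1 : Matrix m m ℝ) X = 0 → A * X - X * A = 0 → X = 0

/-- `A ∈ S(G)`: `A` is symmetric and its off-diagonal nonzero pattern is given by `G`. -/
def InS {m : Type*} [Fintype m] [DecidableEq m]
    (G : SimpleGraph m) (A : Matrix m m ℝ) : Prop :=
  A.IsSymm ∧ ∀ i j, i ≠ j → (A i j ≠ 0 ↔ G.Adj i j)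


/-!
Conjugating by a diagonal `±1` matrix `D` and multiplying by `σ = ±1` keeps the eigenvalue
multiplicities of `A`, up to the relabelling `t ↦ σ t`. On a connected unicyclic graph with an odd
cycle these operations make every off-diagonal entry nonnegative: signs along a BFS spanning tree
can be switched to `+` one vertex at a time, and the one remaining edge, which closes an odd cycle
and therefore joins two vertices whose distances to the root have equal parity, is taken care of by
the choice of `σ`. For the resulting irreducible matrix the largest eigenvalue is simple
(Perron–Frobenius): with `v` a top eigenvector, `|v|` has at least the Rayleigh quotient of `v`, so
it is a top eigenvector too, and a nonnegative top eigenvector vanishes nowhere. Hence the largest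
eigenvalue of `A` is simple when `σ = 1` and the smallest one when `σ = -1`.
-/
section Multiplicity

variable {m : Type*} [Fintype m] [DecidableEq m]

theorem one_le_multOf_iff (A : Matrix m m ℝ) (t : ℝ) :
    1 ≤ multOf A t ↔ ∃ v : m → ℝ, v ≠ 0 ∧ A *ᵥ v = t • v := by
  simp only [multOf, Submodule.one_le_finrank_iff, Submodule.ne_bot_iff, LinearMap.mem_ker,
    mulVecLin_apply, sub_mulVec, smul_mulVec, one_mulVec, sub_eq_zero]
  exact ⟨fun ⟨v, hv, hv0⟩ => ⟨v, hv0, hv⟩, fun ⟨v, hv0, hv⟩ => ⟨v, hv, hv0⟩⟩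

theorem multOf_add_rank (A : Matrix m m ℝ) (t : ℝ) :
    multOf A t + (A - t • 1).rank = Fintype.card m := by
  rw [multOf, Matrix.rank, add_comm, LinearMap.finrank_range_add_finrank_ker,
    Module.finrank_fintype_fun_eq_card]

theorem multOf_smul_mul_mul {P Q : Matrix m m ℝ} (hPQ : P * Q = 1) {ε : ℝ} (hε : ε ≠ 0)
    (A : Matrix m m ℝ) (t : ℝ) : multOf (ε • (P * A * Q)) (ε * t) = multOf A t := by
  have hconj : ε • (P * A * Q) - (ε * t) • 1 = ε • (P * (A - t • 1) * Q) := by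
    rw [Matrix.mul_sub, Matrix.sub_mul, Matrix.mul_smul, Matrix.smul_mul, Matrix.mul_one, hPQ,
      smul_sub, smul_smul]
  have hrank : (ε • (P * A * Q) - (ε * t) • 1).rank = (A - t • 1).rank := by
    rw [hconj, rank_smul_of_mem_nonZeroDivisors _ (mem_nonZeroDivisors_of_ne_zero hε),
      rank_mul_eq_left_of_isUnit_det _ _ (isUnit_det_of_left_inverse hPQ),
      rank_mul_eq_right_of_isUnit_det _ _ (isUnit_det_of_right_inverse hPQ)]
  have h₁ := multOf_add_rank (ε • (P * A * Q)) (ε * t)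
  have h₂ := multOf_add_rank A t
  omega

end Multiplicity

section PerronFrobenius

variable {m : Type*} [Fintype m]

theorem posSemidef_smul_one_sub [DecidableEq m] {B : Matrix m m ℝ} (hB : B.IsSymm) {μ : ℝ}
    (hμ : ∀ t, 1 ≤ multOf B t → t ≤ μ) : (μ • 1 - B).PosSemidef := by
  have hM : (μ • (1 : Matrix m m ℝ) - B).IsHermitian := by
    rw [isHermitian_iff_isSymm, IsSymm, transpose_sub, transpose_smul, transpose_one, hB.eq]
  refine hM.posSemidef_iff_eigenvalues_nonneg.mpr fun i => ?_
  set v : m → ℝ := ⇑(hM.eigenvectorBasis i)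
  have hv : (μ • 1 - B) *ᵥ v = hM.eigenvalues i • v := hM.mulVec_eigenvectorBasis i
  have hv0 : v ≠ 0 := fun h =>
    hM.eigenvectorBasis.orthonormal.ne_zero i (by ext x; exact congrFun h x)
  have hBv : B *ᵥ v = (μ - hM.eigenvalues i) • v := by
    rw [sub_smul, ← hv, sub_mulVec, smul_mulVec, one_mulVec, sub_sub_cancel]
  have := hμ _ ((one_le_multOf_iff B _).mpr ⟨v, hv0, hBv⟩)
  show 0 ≤ hM.eigenvalues i
  linarith

theorem Matrix.PosSemidef.mulVec_abs_eq_zero {M : Matrix m m ℝ} (hM : M.PosSemidef)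
    (hoff : ∀ i j, i ≠ j → M i j ≤ 0) {v : m → ℝ} (hv : M *ᵥ v = 0) :
    M *ᵥ (fun i => |v i|) = 0 := by
  rw [← hM.dotProduct_mulVec_zero_iff, star_trivial]
  refine le_antisymm ?_ (by simpa using hM.dotProduct_mulVec_nonneg (fun i => |v i|))
  calc (fun i => |v i|) ⬝ᵥ M *ᵥ (fun i => |v i|)
      ≤ v ⬝ᵥ M *ᵥ v := by
        simp only [dotProduct, mulVec, Finset.mul_sum]
        refine Finset.sum_le_sum fun i _ => Finset.sum_le_sum fun j _ => ?_
        rcases eq_or_ne i j with rfl | hij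
        · rw [mul_left_comm, abs_mul_abs_self, mul_left_comm]
        · have := mul_le_mul_of_nonpos_left ((le_abs_self (v i * v j)).trans_eq (abs_mul _ _))
            (hoff i j hij)
          linarith
    _ = 0 := by rw [hv, dotProduct_zero]

theorem Matrix.eq_zero_of_mulVec_eq_zero_of_nonneg {G : SimpleGraph m} (hconn : G.Connected)
    {M : Matrix m m ℝ} (hoff : ∀ i j, i ≠ j → M i j ≤ 0) (hadj : ∀ i j, G.Adj i j → M i j ≠ 0)
    {w : m → ℝ} (hw : M *ᵥ w = 0) (hnn : 0 ≤ w) {i : m} (hi : w i = 0) : w = 0 := by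
  have hstep : ∀ x y, G.Adj x y → w x = 0 → w y = 0 := by
    intro x y hxy hx
    have hterm : ∀ j ∈ Finset.univ, M x j * w j ≤ 0 := fun j _ => by
      rcases eq_or_ne x j with rfl | hxj
      · rw [hx, mul_zero]
      · exact mul_nonpos_of_nonpos_of_nonneg (hoff x j hxj) (hnn j)
    have hrow : ∑ j, M x j * w j = 0 := congrFun hw x
    have := (Finset.sum_eq_zero_iff_of_nonpos hterm).mp hrow y (Finset.mem_univ y)
    exact (mul_eq_zero.mp this).resolve_left (hadj x y hxy)
  have hwalk : ∀ {x y} (p : G.Walk x y), w x = 0 → w y = 0 := by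
    intro x y p
    induction p with
    | nil => exact id
    | cons h _ ih => exact ih ∘ hstep _ _ h
  exact funext fun y => hwalk (hconn i y).some hi

theorem Matrix.PosSemidef.finrank_ker_le_one {G : SimpleGraph m} (hconn : G.Connected)
    {M : Matrix m m ℝ} (hM : M.PosSemidef) (hoff : ∀ i j, i ≠ j → M i j ≤ 0)
    (hadj : ∀ i j, G.Adj i j → M i j ≠ 0) : Module.finrank ℝ (LinearMap.ker M.mulVecLin) ≤ 1 := by
  obtain ⟨i₀⟩ := hconn.nonempty
  have hinj :
      Function.Injective ((LinearMap.proj i₀).comp (LinearMap.ker M.mulVecLin).subtype) := by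
    rw [← LinearMap.ker_eq_bot, Submodule.eq_bot_iff]
    rintro ⟨v, hv⟩ hv₀
    simp only [LinearMap.mem_ker, mulVecLin_apply, LinearMap.comp_apply,
      Submodule.subtype_apply, LinearMap.proj_apply] at hv hv₀
    have habs := eq_zero_of_mulVec_eq_zero_of_nonneg hconn hoff hadj
      (hM.mulVec_abs_eq_zero hoff hv) (fun i => abs_nonneg (v i)) (i := i₀) (by simp [hv₀])
    ext i
    simpa using congrFun habs i
  simpa using LinearMap.finrank_le_finrank_of_injective hinj

theorem multOf_eq_one_of_isGreatest [DecidableEq m] {G : SimpleGraph m} (hconn : G.Connected)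
    {B : Matrix m m ℝ} (hB : InS G B) (hnn : ∀ i j, i ≠ j → 0 ≤ B i j) {μ : ℝ}
    (hμ : IsGreatest {t | 1 ≤ multOf B t} μ) : multOf B μ = 1 := by
  set M := μ • 1 - B
  have hoff : ∀ i j, i ≠ j → M i j ≤ 0 := fun i j hij => by
    simpa [M, one_apply_ne hij] using hnn i j hij
  have hadj : ∀ i j, G.Adj i j → M i j ≠ 0 := fun i j h => by
    simpa [M, one_apply_ne (G.ne_of_adj h)] using (hB.2 i j (G.ne_of_adj h)).mpr h
  have hker : LinearMap.ker (B - μ • 1).mulVecLin = LinearMap.ker M.mulVecLin := by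
    ext v
    simp only [LinearMap.mem_ker, mulVecLin_apply, ← neg_sub (μ • 1) B, neg_mulVec, neg_eq_zero,
      M]
  refine le_antisymm ?_ hμ.1
  rw [multOf, hker]
  exact (posSemidef_smul_one_sub hB.1 fun t ht => hμ.2 ht).finrank_ker_le_one hconn hoff hadj

end PerronFrobenius

theorem exists_sign_potential {V : Type*} (pa : V → V) (depth : V → ℕ) (r : V)
    (hpa : ∀ x ≠ r, depth (pa x) + 1 = depth x) (s : V → V → ℝ) (hs : ∀ i j, s i j * s i j = 1) :
    ∃ d : V → ℝ, (∀ x, d x * d x = 1) ∧ ∀ x ≠ r, d x = s (pa x) x * d (pa x) := by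
  refine ⟨fun x => ∏ k ∈ Finset.range (depth x), s (pa^[k + 1] x) (pa^[k] x), fun x => ?_,
    fun x hx => ?_⟩
  · rw [← Finset.prod_mul_distrib]
    exact Finset.prod_eq_one fun k _ => hs _ _
  · beta_reduce
    rw [← hpa x hx, Finset.prod_range_succ', mul_comm]
    simp only [Function.iterate_succ_apply, Function.iterate_zero_apply]

namespace SimpleGraph

variable {V : Type*} {G : SimpleGraph V}

theorem Reachable.exists_adj_dist_add_one {r x : V} (h : G.Reachable r x) (hx : x ≠ r) :
    ∃ y, G.Adj y x ∧ G.dist r y + 1 = G.dist r x := by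
  obtain ⟨p, hp⟩ := h.symm.exists_walk_length_eq_dist
  cases p with
  | nil => exact absurd rfl hx
  | cons hxy q =>
    refine ⟨_, hxy.symm, ?_⟩
    have h₁ := G.dist_le q
    have h₂ := hxy.diff_dist_adj (u := r)
    rw [Walk.length_cons, dist_comm] at hp
    rw [dist_comm (u := _) (v := r)] at h₁
    omega

theorem exists_adj_dist_mod_two_eq (hodd : ¬ G.Colorable 2) (r : V) :
    ∃ u v, G.Adj u v ∧ G.dist r u % 2 = G.dist r v % 2 := by
  by_contra! h
  exact hodd ⟨Coloring.mk (fun x => ⟨G.dist r x % 2, Nat.mod_lt _ two_pos⟩)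
    fun hxy heq => h _ _ hxy (congrArg Fin.val heq)⟩

theorem eq_tree_edge_or_eq_of_ncard_edgeSet [Finite V] (hedges : G.edgeSet.ncard = Nat.card V)
    {r : V} {pa : V → V} (hpa : ∀ x ≠ r, G.Adj (pa x) x ∧ G.dist r (pa x) + 1 = G.dist r x)
    {u v : V} (huv : G.Adj u v) (hpar : G.dist r u % 2 = G.dist r v % 2)
    {x y : V} (hxy : G.Adj x y) : (∃ z ≠ r, s(x, y) = s(pa z, z)) ∨ s(x, y) = s(u, v) := by
  set T := (fun z => s(pa z, z)) '' {r}ᶜ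
  have hinj : Set.InjOn (fun z => s(pa z, z)) {r}ᶜ := by
    intro z hz z' hz' h
    rcases Sym2.eq_iff.mp h with ⟨-, h⟩ | ⟨h₁, h₂⟩
    · exact h
    · have h₃ := (hpa z hz).2
      have h₄ := (hpa z' hz').2
      rw [← h₂, ← h₁] at h₄
      omega
  have hT : T ⊆ G.edgeSet := by
    rintro _ ⟨z, hz, rfl⟩
    exact (hpa z hz).1
  have hcard : (G.edgeSet \ T).ncard ≤ 1 := by
    rw [Set.ncard_sdiff hT, hedges, hinj.ncard_image, Set.ncard_compl,
      Set.ncard_singleton]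
    omega
  have huvT : s(u, v) ∈ G.edgeSet \ T := by
    refine ⟨huv, ?_⟩
    rintro ⟨z, hz, h⟩
    have := (hpa z hz).2
    rcases Sym2.eq_iff.mp h with ⟨rfl, rfl⟩ | ⟨rfl, rfl⟩ <;> omega
  by_cases hx : s(x, y) ∈ T
  · obtain ⟨z, hz, h⟩ := hx
    exact Or.inl ⟨z, hz, h.symm⟩
  · exact Or.inr ((Set.ncard_le_one).mp hcard _ ⟨hxy, hx⟩ _ huvT)

theorem Connected.exists_switching_of_odd_unicyclic [Finite V] (hconn : G.Connected)
    (hedges : G.edgeSet.ncard = Nat.card V) (hodd : ¬ G.Colorable 2) (s : V → V → ℝ)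
    (hs : ∀ i j, s i j * s i j = 1) (hsymm : ∀ i j, s j i = s i j) :
    ∃ σ : ℝ, ∃ d : V → ℝ, σ * σ = 1 ∧ (∀ i, d i * d i = 1) ∧
      ∀ i j, G.Adj i j → σ * (d i * d j) = s i j := by
  obtain ⟨r⟩ := hconn.nonempty
  choose! pa hpa using fun x (hx : x ≠ r) => (hconn r x).exists_adj_dist_add_one hx
  obtain ⟨d, hd, hdpa⟩ := exists_sign_potential pa (G.dist r) r (fun x hx => (hpa x hx).2) s hs
  obtain ⟨u, v, huv, hpar⟩ := exists_adj_dist_mod_two_eq hodd r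
  set σ := s u v * (d u * d v)
  have hσ : σ * σ = 1 := by
    linear_combination (d u * d u * (d v * d v)) * hs u v + (d v * d v) * hd u + hd v
  have hσ_even : ∀ k, σ ^ (2 * k) = 1 := fun k => by rw [pow_mul, sq, hσ, one_pow]
  -- Tree edges join vertices of opposite parity, so the powers of `σ` cancel on them; on the
  -- extra edge the parities agree and one factor `σ` survives, which is what fixes `σ`.
  set e : V → ℝ := fun x => σ ^ G.dist r x * d x
  have he : ∀ x y, σ * (e x * e y) = σ ^ (G.dist r x + G.dist r y + 1) * (d x * d y) := by
    intro x y
    ring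
  have htree : ∀ z ≠ r, σ * (e (pa z) * e z) = s (pa z) z := by
    intro z hz
    obtain ⟨k, hk⟩ : ∃ k, G.dist r (pa z) + G.dist r z + 1 = 2 * k :=
      ⟨G.dist r z, by have := (hpa z hz).2; omega⟩
    rw [he, hk, hσ_even, one_mul, hdpa z hz]
    linear_combination s (pa z) z * hd (pa z)
  have hextra : σ * (e u * e v) = s u v := by
    obtain ⟨k, hk⟩ : ∃ k, G.dist r u + G.dist r v + 1 = 2 * k + 1 :=
      ⟨(G.dist r u + G.dist r v) / 2, by omega⟩
    rw [he, hk, pow_succ, hσ_even, one_mul]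
    simp only [σ]
    linear_combination s u v * (d v * d v) * hd u + s u v * hd v
  refine ⟨σ, e, hσ, fun x => ?_, fun x y hxy => ?_⟩
  · rw [mul_mul_mul_comm, ← mul_pow, hσ, one_pow, one_mul, hd]
  rcases eq_tree_edge_or_eq_of_ncard_edgeSet hedges hpa huv hpar hxy with ⟨z, hz, h⟩ | h <;>
    rcases Sym2.eq_iff.mp h with ⟨rfl, rfl⟩ | ⟨rfl, rfl⟩
  · exact htree _ hz
  · rw [mul_comm (e _), hsymm]
    exact htree _ hz
  · exact hextra
  · rw [mul_comm (e _), hsymm]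
    exact hextra

end SimpleGraph

section Signing

variable {m : Type*} [Fintype m] [DecidableEq m] {G : SimpleGraph m} {A : Matrix m m ℝ}

theorem smul_diagonal_mul_mul_diagonal_apply (ε : ℝ) (d : m → ℝ) (A : Matrix m m ℝ) (i j : m) :
    (ε • (diagonal d * A * diagonal d)) i j = ε * (d i * d j) * A i j := by
  simp only [Matrix.smul_apply, mul_diagonal, diagonal_mul, smul_eq_mul]
  ring

theorem InS.smul_diagonal_mul_mul_diagonal (hA : InS G A) {ε : ℝ} (hε : ε ≠ 0) {d : m → ℝ}
    (hd : ∀ i, d i ≠ 0) : InS G (ε • (diagonal d * A * diagonal d)) := by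
  refine ⟨?_, fun i j hij => ?_⟩
  · ext i j
    simp only [transpose_apply, smul_diagonal_mul_mul_diagonal_apply, hA.1.apply, mul_comm (d j)]
  · rw [smul_diagonal_mul_mul_diagonal_apply, ← hA.2 i j hij]
    simp [hε, hd]

theorem InS.exists_smul_diagonal_conj_nonneg (hA : InS G A) (hconn : G.Connected)
    (hedges : G.edgeSet.ncard = Nat.card m) (hodd : ¬ G.Colorable 2) :
    ∃ σ : ℝ, ∃ d : m → ℝ, σ * σ = 1 ∧ (∀ i, d i * d i = 1) ∧
      ∀ i j, i ≠ j → 0 ≤ (σ • (diagonal d * A * diagonal d)) i j := by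
  obtain ⟨σ, d, hσ, hd, hsign⟩ := hconn.exists_switching_of_odd_unicyclic hedges hodd
    (fun i j => if 0 < A i j then 1 else -1) (fun i j => by split_ifs <;> norm_num)
    (fun i j => by simp only [hA.1.apply])
  refine ⟨σ, d, hσ, hd, fun i j hij => ?_⟩
  rw [smul_diagonal_mul_mul_diagonal_apply]
  by_cases hadj : G.Adj i j
  · rw [hsign i j hadj]
    split_ifs with h
    · linarith
    · linarith [not_lt.mp h]
  · rw [not_not.mp (mt (hA.2 i j hij).mp hadj), mul_zero]

end Signing

/-- If `G` is a connected unicyclic graph (number of edges = number of vertices)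
whose unique cycle is odd (equivalently `G` is not bipartite), then for every
`A ∈ S(G)` at least one of the smallest and the largest eigenvalue of `A` is simple. -/
theorem extreme_eigenvalue_simple_of_odd_unicyclic {n : ℕ}
    (G : SimpleGraph (Fin n)) (hconn : G.Connected)
    (hedges : G.edgeSet.ncard = n) (hodd : ¬ G.Colorable 2)
    (A : Matrix (Fin n) (Fin n) ℝ) (hA : InS G A)
    (lmin lmax : ℝ)
    (hminEig : 1 ≤ multOf A lmin) (hmaxEig : 1 ≤ multOf A lmax)
    (hmin : ∀ t, 1 ≤ multOf A t → lmin ≤ t)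
    (hmax : ∀ t, 1 ≤ multOf A t → t ≤ lmax) :
    multOf A lmin = 1 ∨ multOf A lmax = 1 := by
  obtain ⟨σ, d, hσ, hd, hnn⟩ :=
    hA.exists_smul_diagonal_conj_nonneg hconn (by rwa [Nat.card_fin]) hodd
  have hσ₀ : σ ≠ 0 := left_ne_zero_of_mul_eq_one hσ
  have hB := hA.smul_diagonal_mul_mul_diagonal hσ₀ fun i => left_ne_zero_of_mul_eq_one (hd i)
  have hmult : ∀ t, multOf (σ • (diagonal d * A * diagonal d)) (σ * t) = multOf A t :=
    multOf_smul_mul_mul (by rw [diagonal_mul_diagonal, funext hd, diagonal_one]) hσ₀ A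
  rcases mul_self_eq_one_iff.mp hσ with rfl | rfl
  · right
    simp only [one_mul] at hmult
    rw [← hmult]
    exact multOf_eq_one_of_isGreatest hconn hB hnn
      ⟨hmaxEig.trans_eq (hmult lmax).symm, fun t ht => hmax t (by rwa [← hmult])⟩
  · left
    rw [← hmult]
    refine multOf_eq_one_of_isGreatest hconn hB hnn
      ⟨hminEig.trans_eq (hmult lmin).symm, fun t ht => ?_⟩
    have := hmin (-t) (by rwa [← hmult, neg_one_mul, neg_neg])
    linarith
end

section
/- If a real symmetric matrix A has the Strong Spectral Property, then for every nonzero real number α and every real number β, the matrix αA + βI also has the Strong Spectral Property. -/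
open Matrix

theorem ssp_scale_shift {n : ℕ} (A : Matrix (Fin n) (Fin n) ℝ) (hA : A.IsSymm)
    (hSSP : HasSSP A) (α β : ℝ) (hα : α ≠ 0) :
    HasSSP (α • A + β • (1 : Matrix (Fin n) (Fin n) ℝ)) := by
  intro X hX hHad hI hComm
  apply hSSP X hX _ hI
  · have : α • (A * X - X * A) = 0 := by
      have := hComm
      simp only [add_mul, mul_add, smul_mul_assoc, mul_smul_comm, one_mul, mul_one] at this
      rw [smul_sub]
      abel_nf at this ⊢
      convert this using 2 <;> abel
    exact (smul_eq_zero.mp this).resolve_left hα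
  · have h : Matrix.hadamard (α • A) X + Matrix.hadamard (β • (1:Matrix (Fin n) (Fin n) ℝ)) X = 0 := by
      rw [← Matrix.add_hadamard]; exact hHad
    have h2 : Matrix.hadamard (β • (1:Matrix (Fin n) (Fin n) ℝ)) X = 0 := by
      ext i j
      by_cases hij : i = j
      · subst hij
        have := congrFun (congrFun hI i) i
        simp [Matrix.hadamard] at this ⊢
        simp [this]
      · simp [Matrix.hadamard, Matrix.one_apply_ne hij]
    rw [h2, add_zero, Matrix.smul_hadamard] at h
    have := (smul_eq_zero.mp h).resolve_left hα
    exact this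
end

section
/- Let C_4 denote the cycle graph on vertices {1,2,3,4}. For every pair of real numbers μ₁ < μ₂, there exists a matrix A ∈ S(C_4) that has the Strong Spectral Property and whose spectrum is the multiset {μ₁, μ₁, μ₂, μ₂} (i.e., A has eigenvalues μ₁ and μ₂, each of multiplicity 2). -/
open Matrix

/-- The cycle graph `C₄` on vertices `{0,1,2,3}`. -/
def cycle4 : SimpleGraph (Fin 4) :=
  SimpleGraph.fromRel fun i j => (i.val, j.val) ∈ [(0,1), (1,2), (2,3), (0,3)]

/-! `c4Matrix b c = b • 1 + c • M`, where `M` weights the edges of `C₄` so that its rows are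
orthogonal of norm `5`, i.e. `M * M = 25 • 1`. So `(A - (b - 5c))(A - (b + 5c)) = 0`, no other
eigenvalue occurs, and two independent eigenvectors for each of `b ∓ 5c` fill up all four
dimensions. For the SSP, a symmetric `X` vanishing on the diagonal and on the edges lives on the
two non-edges `{0,2}`, `{1,3}`, and the commutator entries `(0,1)`, `(0,3)` force
`c (x₁₃ - x₀₂) = c (x₁₃ + x₀₂) = 0`. -/

section Multiplicity

variable {n : Type*} [Fintype n] [DecidableEq n] (A : Matrix n n ℝ)

lemma mem_ker_sub_smul_one_iff (μ : ℝ) (v : n → ℝ) :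
    v ∈ LinearMap.ker (A - μ • (1 : Matrix n n ℝ)).mulVecLin ↔ A *ᵥ v = μ • v := by
  simp [sub_eq_zero]

lemma card_le_multOf {ι : Type*} [Fintype ι] {μ : ℝ} {v : ι → n → ℝ}
    (hv : ∀ i, A *ᵥ v i = μ • v i) (hind : LinearIndependent ℝ v) :
    Fintype.card ι ≤ multOf A μ := by
  have hspan : Submodule.span ℝ (Set.range v) ≤
      LinearMap.ker (A - μ • (1 : Matrix n n ℝ)).mulVecLin := by
    rw [Submodule.span_le]
    rintro _ ⟨i, rfl⟩
    exact (mem_ker_sub_smul_one_iff A μ (v i)).mpr (hv i)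
  exact finrank_span_eq_card hind ▸ Submodule.finrank_mono hspan

lemma multOf_add_multOf_le {μ ν : ℝ} (hμν : μ ≠ ν) :
    multOf A μ + multOf A ν ≤ Fintype.card n := by
  refine (Submodule.finrank_add_finrank_le_of_disjoint ?_).trans_eq
    (Module.finrank_fintype_fun_eq_card ℝ)
  rw [Submodule.disjoint_def]
  intro v hμ hν
  rw [mem_ker_sub_smul_one_iff] at hμ hν
  have : (μ - ν) • v = 0 := by rw [sub_smul, ← hμ, ← hν, sub_self]
  exact (smul_eq_zero.mp this).resolve_left (sub_ne_zero.mpr hμν)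

lemma multOf_eq_zero_of_mul_eq_zero {μ ν t : ℝ}
    (hA : (A - μ • (1 : Matrix n n ℝ)) * (A - ν • (1 : Matrix n n ℝ)) = 0)
    (htμ : t ≠ μ) (htν : t ≠ ν) : multOf A t = 0 := by
  rw [multOf, Submodule.finrank_eq_zero, Submodule.eq_bot_iff]
  intro v hv
  rw [mem_ker_sub_smul_one_iff] at hv
  have key : ((A - μ • (1 : Matrix n n ℝ)) * (A - ν • (1 : Matrix n n ℝ))) *ᵥ v =
      ((t - μ) * (t - ν)) • v := by
    simp only [← Matrix.mulVec_mulVec, Matrix.sub_mulVec, Matrix.smul_mulVec, Matrix.one_mulVec,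
      hv, ← sub_smul, Matrix.mulVec_smul, smul_smul, mul_comm]
  rw [hA, Matrix.zero_mulVec, eq_comm, smul_eq_zero] at key
  exact key.resolve_left (mul_ne_zero (sub_ne_zero.mpr htμ) (sub_ne_zero.mpr htν))

end Multiplicity

def c4Matrix (b c : ℝ) : Matrix (Fin 4) (Fin 4) ℝ :=
  !![b, 3 * c, 0, 4 * c; 3 * c, b, 4 * c, 0; 0, 4 * c, b, -3 * c; 4 * c, 0, -3 * c, b]

lemma c4Matrix_mem_S {b c : ℝ} (hc : c ≠ 0) : InS cycle4 (c4Matrix b c) := by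
  refine ⟨?_, fun i j hij => ?_⟩
  · ext i j
    fin_cases i <;> fin_cases j <;> simp [c4Matrix]
  · fin_cases i <;> fin_cases j <;> simp_all [c4Matrix, cycle4]

lemma c4Matrix_hasSSP {b c : ℝ} (hc : c ≠ 0) : HasSSP (c4Matrix b c) := by
  intro X hXsymm hAX hIX hcomm
  have hX : X = !![0, 0, X 0 2, 0; 0, 0, 0, X 1 3; X 0 2, 0, 0, 0; 0, X 1 3, 0, 0] := by
    ext i j
    have hA := congr_fun₂ hAX i j
    have hI := congr_fun₂ hIX i j
    have hS := congr_fun₂ hXsymm i j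
    fin_cases i <;> fin_cases j <;> simp_all [c4Matrix]
  have e01 := congr_fun₂ hcomm 0 1
  have e03 := congr_fun₂ hcomm 0 3
  rw [hX] at e01 e03
  simp [c4Matrix] at e01 e03
  have hp : X 0 2 = 0 :=
    (mul_eq_zero.mp (by linear_combination e03 / 6 - e01 / 8 : c * X 0 2 = 0)).resolve_left hc
  have hq : X 1 3 = 0 :=
    (mul_eq_zero.mp (by linear_combination e01 / 8 + e03 / 6 : c * X 1 3 = 0)).resolve_left hc
  rw [hX, hp, hq]
  ext i j
  fin_cases i <;> fin_cases j <;> rfl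

def c4EigenvectorsLow : Fin 2 → Fin 4 → ℝ := ![![3, -5, 4, 0], ![4, 0, -3, -5]]

def c4EigenvectorsHigh : Fin 2 → Fin 4 → ℝ := ![![3, 5, 4, 0], ![4, 0, -3, 5]]

lemma c4Matrix_mulVec_eigenvectorsLow (b c : ℝ) (i : Fin 2) :
    c4Matrix b c *ᵥ c4EigenvectorsLow i = (b - 5 * c) • c4EigenvectorsLow i := by
  ext j
  fin_cases i <;> fin_cases j <;>
    simp [c4Matrix, c4EigenvectorsLow, Matrix.mulVec, dotProduct, Fin.sum_univ_four] <;> ring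

lemma c4Matrix_mulVec_eigenvectorsHigh (b c : ℝ) (i : Fin 2) :
    c4Matrix b c *ᵥ c4EigenvectorsHigh i = (b + 5 * c) • c4EigenvectorsHigh i := by
  ext j
  fin_cases i <;> fin_cases j <;>
    simp [c4Matrix, c4EigenvectorsHigh, Matrix.mulVec, dotProduct, Fin.sum_univ_four] <;> ring

lemma linearIndependent_c4EigenvectorsLow : LinearIndependent ℝ c4EigenvectorsLow := by
  refine linearIndependent_fin2.mpr ⟨fun h => ?_, fun a h => ?_⟩
  · simpa [c4EigenvectorsLow] using congr_fun h 3
  · simpa [c4EigenvectorsLow] using congr_fun h 1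

lemma linearIndependent_c4EigenvectorsHigh : LinearIndependent ℝ c4EigenvectorsHigh := by
  refine linearIndependent_fin2.mpr ⟨fun h => ?_, fun a h => ?_⟩
  · simpa [c4EigenvectorsHigh] using congr_fun h 3
  · simpa [c4EigenvectorsHigh] using congr_fun h 1

lemma c4Matrix_quadratic (b c : ℝ) :
    (c4Matrix b c - (b - 5 * c) • (1 : Matrix (Fin 4) (Fin 4) ℝ)) *
      (c4Matrix b c - (b + 5 * c) • (1 : Matrix (Fin 4) (Fin 4) ℝ)) = 0 := by
  ext i j
  fin_cases i <;> fin_cases j <;>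
    simp [c4Matrix, Matrix.mul_apply, Matrix.one_apply, Fin.sum_univ_four] <;> ring

lemma multOf_c4Matrix {b c : ℝ} (hc : c ≠ 0) :
    multOf (c4Matrix b c) (b - 5 * c) = 2 ∧ multOf (c4Matrix b c) (b + 5 * c) = 2 := by
  have hlow := card_le_multOf _ (c4Matrix_mulVec_eigenvectorsLow b c)
    linearIndependent_c4EigenvectorsLow
  have hhigh := card_le_multOf _ (c4Matrix_mulVec_eigenvectorsHigh b c)
    linearIndependent_c4EigenvectorsHigh
  have hsum := multOf_add_multOf_le (c4Matrix b c) (μ := b - 5 * c) (ν := b + 5 * c)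
    (by intro h; apply hc; linarith)
  simp only [Fintype.card_fin] at hlow hhigh hsum
  omega

/-- For every `μ₁ < μ₂` there is an SSP matrix in `S(C₄)` with spectrum
`{μ₁, μ₁, μ₂, μ₂}`. -/
theorem c4_oml22_spectrally_arbitrary_SSP (μ₁ μ₂ : ℝ) (h : μ₁ < μ₂) :
    ∃ A : Matrix (Fin 4) (Fin 4) ℝ, InS cycle4 A ∧ HasSSP A ∧
      multOf A μ₁ = 2 ∧ multOf A μ₂ = 2 ∧
      ∀ t, t ≠ μ₁ → t ≠ μ₂ → multOf A t = 0 := by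
  obtain ⟨b, c, hc, rfl, rfl⟩ : ∃ b c : ℝ, c ≠ 0 ∧ μ₁ = b - 5 * c ∧ μ₂ = b + 5 * c :=
    ⟨(μ₁ + μ₂) / 2, (μ₂ - μ₁) / 10, (div_pos (sub_pos.mpr h) (by norm_num)).ne', by ring,
      by ring⟩
  obtain ⟨hlow, hhigh⟩ := multOf_c4Matrix (b := b) hc
  exact ⟨c4Matrix b c, c4Matrix_mem_S hc, c4Matrix_hasSSP hc, hlow, hhigh,
    fun _ ht₁ ht₂ => multOf_eq_zero_of_mul_eq_zero _ (c4Matrix_quadratic b c) ht₁ ht₂⟩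
end

section
/- Let K_{1,3} denote the star graph on vertices {1,2,3,4} with center 1 adjacent to 2, 3, 4. For all real numbers λ₁ < λ₂ < λ₃, there exists a matrix A ∈ S(K_{1,3}) that has the Strong Spectral Property and whose spectrum is the multiset {λ₁, λ₂, λ₂, λ₃} (ordered multiplicity list (1,2,1)). -/
open Matrix

/-- The star `K_{1,3}` on vertices `{0,1,2,3}` with center `0`. -/
def star13 : SimpleGraph (Fin 4) :=
  SimpleGraph.fromRel fun i j => i = 0 ∧ j ≠ 0

section Aux

variable (l1 l2 l3 s d0 : ℝ)

/-- The arrow matrix. -/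
def arrowM : Matrix (Fin 4) (Fin 4) ℝ :=
  !![d0, s, s, s; s, l2, 0, 0; s, 0, l2, 0; s, 0, 0, l2]

lemma arrowM_symm : (arrowM l2 s d0).IsSymm := by
  rw [Matrix.IsSymm]
  ext i j
  fin_cases i <;> fin_cases j <;> simp [arrowM, Matrix.vecHead, Matrix.vecTail]

lemma arrowM_pattern (hs : s ≠ 0) :
    ∀ i j : Fin 4, i ≠ j → ((arrowM l2 s d0) i j ≠ 0 ↔ star13.Adj i j) := by
  intro i j hij
  fin_cases i <;> fin_cases j <;>
    simp_all [arrowM, star13, SimpleGraph.fromRel_adj, Matrix.vecHead, Matrix.vecTail]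

lemma arrowM_ker (t : ℝ) (x : Fin 4 → ℝ) :
    x ∈ LinearMap.ker ((arrowM l2 s d0) - t • (1 : Matrix (Fin 4) (Fin 4) ℝ)).mulVecLin ↔
    ((d0 - t) * x 0 + s * x 1 + s * x 2 + s * x 3 = 0 ∧
     s * x 0 + (l2 - t) * x 1 = 0 ∧
     s * x 0 + (l2 - t) * x 2 = 0 ∧
     s * x 0 + (l2 - t) * x 3 = 0) := by
  rw [LinearMap.mem_ker, Matrix.mulVecLin_apply, funext_iff]
  constructor
  · intro h
    have h0 := h 0; have h1 := h 1; have h2 := h 2; have h3 := h 3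
    simp [arrowM, Matrix.mulVec, dotProduct, Fin.sum_univ_four, Matrix.one_apply,
      Matrix.vecHead, Matrix.vecTail] at h0 h1 h2 h3
    refine ⟨by linarith, by linarith, by linarith, by linarith⟩
  · rintro ⟨e0, e1, e2, e3⟩ i
    fin_cases i <;>
      simp [arrowM, Matrix.mulVec, dotProduct, Fin.sum_univ_four, Matrix.one_apply,
        Matrix.vecHead, Matrix.vecTail] <;> linarith

lemma arrowM_ssp (hs : s ≠ 0) : HasSSP (arrowM l2 s d0) := by
  intro X hsym hH hI hC
  have hXsym : ∀ i j, X j i = X i j := fun i j => (Matrix.IsSymm.apply hsym i j)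
  have had : ∀ i j : Fin 4, (arrowM l2 s d0) i j * X i j = 0 := by
    intro i j
    have := congrFun (congrFun hH i) j
    simpa [Matrix.hadamard_apply] using this
  have hdiag : ∀ i : Fin 4, X i i = 0 := by
    intro i
    have := congrFun (congrFun hI i) i
    simpa [Matrix.hadamard_apply, Matrix.one_apply] using this
  have hX01 : X 0 1 = 0 := by
    have := had 0 1
    simp [arrowM, Matrix.vecHead, Matrix.vecTail, hs] at this
    exact this
  have hX02 : X 0 2 = 0 := by
    have := had 0 2
    simp [arrowM, Matrix.vecHead, Matrix.vecTail, hs] at this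
    exact this
  have hX03 : X 0 3 = 0 := by
    have := had 0 3
    simp [arrowM, Matrix.vecHead, Matrix.vecTail, hs] at this
    exact this
  have hX10 : X 1 0 = 0 := by rw [hXsym]; exact hX01
  have hX20 : X 2 0 = 0 := by rw [hXsym]; exact hX02
  have hX30 : X 3 0 = 0 := by rw [hXsym]; exact hX03
  have hcom : ∀ i j : Fin 4, (arrowM l2 s d0 * X) i j - (X * arrowM l2 s d0) i j = 0 := by
    intro i j
    have := congrFun (congrFun hC i) j
    simpa [Matrix.sub_apply] using this
  have e1 := hcom 0 1
  have e2 := hcom 0 2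
  have e3 := hcom 0 3
  simp [arrowM, Matrix.mul_apply, Fin.sum_univ_four, Matrix.vecHead, Matrix.vecTail,
    hX01, hX02, hX03, hX10, hX20, hX30, hdiag] at e1 e2 e3
  have hX21 : X 2 1 = X 1 2 := hXsym 1 2
  have hX31 : X 3 1 = X 1 3 := hXsym 1 3
  have hX32 : X 3 2 = X 2 3 := hXsym 2 3
  rw [hX21, hX31] at e1
  rw [hX32] at e2
  have hp : X 1 2 + X 1 3 = 0 := by
    have h' : s * (X 1 2 + X 1 3) = 0 := by
      first
      | linear_combination e1
      | linear_combination -e1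
      | linarith [e1]
    exact (mul_eq_zero.mp h').resolve_left hs
  have hq : X 1 2 + X 2 3 = 0 := by
    have h' : s * (X 1 2 + X 2 3) = 0 := by
      first
      | linear_combination e2
      | linear_combination -e2
      | linarith [e2]
    exact (mul_eq_zero.mp h').resolve_left hs
  have hr : X 1 3 + X 2 3 = 0 := by
    have h' : s * (X 1 3 + X 2 3) = 0 := by
      first
      | linear_combination e3
      | linear_combination -e3
      | linarith [e3]
    exact (mul_eq_zero.mp h').resolve_left hs
  have h12' : X 1 2 = 0 := by linarith
  have h13' : X 1 3 = 0 := by linarith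
  have h23' : X 2 3 = 0 := by linarith
  have h21' : X 2 1 = 0 := by rw [hX21]; exact h12'
  have h31' : X 3 1 = 0 := by rw [hX31]; exact h13'
  have h32' : X 3 2 = 0 := by rw [hX32]; exact h23'
  ext i j
  fin_cases i <;> fin_cases j <;>
    simp [hX01, hX02, hX03, hX10, hX20, hX30, hdiag, h12', h13', h23', h21', h31', h32']

end Aux

/-- For all `λ₁ < λ₂ < λ₃` there is an SSP matrix in `S(K_{1,3})` with spectrum
`{λ₁, λ₂, λ₂, λ₃}` (ordered multiplicity list `(1,2,1)`). -/
theorem star13_oml121_spectrally_arbitrary_SSP (l1 l2 l3 : ℝ)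
    (h12 : l1 < l2) (h23 : l2 < l3) :
    ∃ A : Matrix (Fin 4) (Fin 4) ℝ, InS star13 A ∧ HasSSP A ∧
      multOf A l1 = 1 ∧ multOf A l2 = 2 ∧ multOf A l3 = 1 ∧
      ∀ t, t ≠ l1 → t ≠ l2 → t ≠ l3 → multOf A t = 0 := by
  have hpos : (0:ℝ) < (l2 - l1) * (l3 - l2) / 3 := by
    have h1 : 0 < l2 - l1 := by linarith
    have h2 : 0 < l3 - l2 := by linarith
    positivity
  obtain ⟨s, hs, hs2⟩ : ∃ s : ℝ, 0 < s ∧ 3 * (s * s) = (l2 - l1) * (l3 - l2) := by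
    refine ⟨Real.sqrt ((l2 - l1) * (l3 - l2) / 3), Real.sqrt_pos.mpr hpos, ?_⟩
    rw [Real.mul_self_sqrt hpos.le]; ring
  have hsne : s ≠ 0 := ne_of_gt hs
  set d0 : ℝ := l1 + l3 - l2 with hd0
  refine ⟨arrowM l2 s d0, ⟨arrowM_symm l2 s d0, arrowM_pattern l2 s d0 hsne⟩,
    arrowM_ssp l2 s d0 hsne, ?_, ?_, ?_, ?_⟩
  · -- mult at l1 = 1
    have hv : LinearMap.ker ((arrowM l2 s d0) - l1 • (1 : Matrix (Fin 4) (Fin 4) ℝ)).mulVecLin =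
        Submodule.span ℝ {![l2 - l1, -s, -s, -s]} := by
      ext x
      rw [arrowM_ker, Submodule.mem_span_singleton]
      have hne : l2 - l1 ≠ 0 := by intro h; linarith
      constructor
      · rintro ⟨e0, e1, e2, e3⟩
        refine ⟨x 0 / (l2 - l1), ?_⟩
        funext i
        fin_cases i
        · show x 0 / (l2 - l1) * (l2 - l1) = x 0
          field_simp
        · show x 0 / (l2 - l1) * (-s) = x 1
          field_simp
          linarith [e1]
        · show x 0 / (l2 - l1) * (-s) = x 2
          field_simp
          linarith [e2]
        · show x 0 / (l2 - l1) * (-s) = x 3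
          field_simp
          linarith [e3]
      · rintro ⟨c, rfl⟩
        refine ⟨?_, ?_, ?_, ?_⟩
        · show (d0 - l1) * (c * (l2 - l1)) + s * (c * -s) + s * (c * -s) + s * (c * -s) = 0
          linear_combination (c * (l2 - l1)) * hd0 - c * hs2
        · show s * (c * (l2 - l1)) + (l2 - l1) * (c * -s) = 0
          ring
        · show s * (c * (l2 - l1)) + (l2 - l1) * (c * -s) = 0
          ring
        · show s * (c * (l2 - l1)) + (l2 - l1) * (c * -s) = 0
          ring
    rw [multOf, hv, finrank_span_singleton]
    intro h
    have := congrFun h 0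
    simp at this
    linarith
  · -- mult at l2 = 2
    have hv : LinearMap.ker ((arrowM l2 s d0) - l2 • (1 : Matrix (Fin 4) (Fin 4) ℝ)).mulVecLin =
        Submodule.span ℝ (Set.range ![![(0:ℝ),1,0,-1], ![(0:ℝ),0,1,-1]]) := by
      ext x
      rw [arrowM_ker]
      constructor
      · rintro ⟨e0, e1, e2, e3⟩
        have hx0 : x 0 = 0 := by
          have h' : s * x 0 = 0 := by linarith
          exact (mul_eq_zero.mp h').resolve_left hsne
        have hsum : x 1 + x 2 + x 3 = 0 := by
          have h1 : s * (x 1 + x 2 + x 3) = 0 := by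
            linear_combination e0 - (d0 - l2) * hx0
          exact (mul_eq_zero.mp h1).resolve_left hsne
        have hxe : x = x 1 • ![(0:ℝ),1,0,-1] + x 2 • ![(0:ℝ),0,1,-1] := by
          funext i
          fin_cases i
          · show x 0 = x 1 * 0 + x 2 * 0
            rw [hx0]; ring
          · show x 1 = x 1 * 1 + x 2 * 0
            ring
          · show x 2 = x 1 * 0 + x 2 * 1
            ring
          · show x 3 = x 1 * (-1) + x 2 * (-1)
            linarith
        rw [hxe]
        exact Submodule.add_mem _
          (Submodule.smul_mem _ _ (Submodule.subset_span ⟨0, rfl⟩))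
          (Submodule.smul_mem _ _ (Submodule.subset_span ⟨1, rfl⟩))
      · intro hx
        induction hx using Submodule.span_induction with
        | mem y hy =>
          obtain ⟨i, rfl⟩ := hy
          fin_cases i <;>
            refine ⟨?_, ?_, ?_, ?_⟩ <;>
            simp [Matrix.vecHead, Matrix.vecTail] <;> ring
        | zero => refine ⟨?_, ?_, ?_, ?_⟩ <;> simp
        | add y z _ _ hy hz =>
          obtain ⟨a0, a1, a2, a3⟩ := hy
          obtain ⟨b0, b1, b2, b3⟩ := hz
          refine ⟨?_, ?_, ?_, ?_⟩ <;> simp only [Pi.add_apply] <;> linarith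
        | smul c y _ hy =>
          obtain ⟨a0, a1, a2, a3⟩ := hy
          refine ⟨?_, ?_, ?_, ?_⟩ <;> simp only [Pi.smul_apply, smul_eq_mul]
          · linear_combination c * a0
          · linear_combination c * a1
          · linear_combination c * a2
          · linear_combination c * a3
    rw [multOf, hv, finrank_span_eq_card]
    · simp
    · rw [linearIndependent_fin2]
      constructor
      · intro h
        have := congrFun h 2
        simp [Matrix.vecHead, Matrix.vecTail] at this
      · intro a h
        have := congrFun h 1
        simp [Matrix.vecHead, Matrix.vecTail] at this
  · -- mult at l3 = 1
    have hv : LinearMap.ker ((arrowM l2 s d0) - l3 • (1 : Matrix (Fin 4) (Fin 4) ℝ)).mulVecLin =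
        Submodule.span ℝ {![l3 - l2, s, s, s]} := by
      ext x
      rw [arrowM_ker, Submodule.mem_span_singleton]
      have hne : l3 - l2 ≠ 0 := by intro h; linarith
      constructor
      · rintro ⟨e0, e1, e2, e3⟩
        refine ⟨x 0 / (l3 - l2), ?_⟩
        funext i
        fin_cases i
        · show x 0 / (l3 - l2) * (l3 - l2) = x 0
          field_simp
        · show x 0 / (l3 - l2) * s = x 1
          field_simp
          linarith [e1]
        · show x 0 / (l3 - l2) * s = x 2
          field_simp
          linarith [e2]
        · show x 0 / (l3 - l2) * s = x 3
          field_simp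
          linarith [e3]
      · rintro ⟨c, rfl⟩
        refine ⟨?_, ?_, ?_, ?_⟩
        · show (d0 - l3) * (c * (l3 - l2)) + s * (c * s) + s * (c * s) + s * (c * s) = 0
          linear_combination (c * (l3 - l2)) * hd0 + c * hs2
        · show s * (c * (l3 - l2)) + (l2 - l3) * (c * s) = 0
          ring
        · show s * (c * (l3 - l2)) + (l2 - l3) * (c * s) = 0
          ring
        · show s * (c * (l3 - l2)) + (l2 - l3) * (c * s) = 0
          ring
    rw [multOf, hv, finrank_span_singleton]
    intro h
    have := congrFun h 0
    simp at this
    linarith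
  · -- generic t
    intro t ht1 ht2 ht3
    have hv : LinearMap.ker ((arrowM l2 s d0) - t • (1 : Matrix (Fin 4) (Fin 4) ℝ)).mulVecLin
        = ⊥ := by
      rw [Submodule.eq_bot_iff]
      intro x hx
      rw [arrowM_ker] at hx
      obtain ⟨e0, e1, e2, e3⟩ := hx
      have hne2 : l2 - t ≠ 0 := fun h => ht2 (by linarith)
      have hquad : (t - l1) * (t - l3) ≠ 0 :=
        mul_ne_zero (sub_ne_zero.mpr ht1) (sub_ne_zero.mpr ht3)
      have hx0 : x 0 = 0 := by
        have key : ((t - l1) * (t - l3)) * x 0 = 0 := by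
          linear_combination (l2 - t) * e0 - s * e1 - s * e2 - s * e3 +
            (x 0 * (l2 - t)) * hd0.symm + x 0 * hs2
        exact (mul_eq_zero.mp key).resolve_left hquad
      have hx1 : x 1 = 0 := by
        have h' : (l2 - t) * x 1 = 0 := by rw [hx0] at e1; linarith
        exact (mul_eq_zero.mp h').resolve_left hne2
      have hx2 : x 2 = 0 := by
        have h' : (l2 - t) * x 2 = 0 := by rw [hx0] at e2; linarith
        exact (mul_eq_zero.mp h').resolve_left hne2
      have hx3 : x 3 = 0 := by
        have h' : (l2 - t) * x 3 = 0 := by rw [hx0] at e3; linarith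
        exact (mul_eq_zero.mp h').resolve_left hne2
      funext i
      fin_cases i <;> simp [hx0, hx1, hx2, hx3]
    rw [multOf, hv, finrank_bot]
end

section
/- Let C_5 denote the cycle graph on vertices {1,2,3,4,5}. For all real numbers λ₁ < λ₂ < λ₃, there exists a matrix A ∈ S(C_5) that has the Strong Spectral Property and whose spectrum is the multiset {λ₁, λ₁, λ₂, λ₂, λ₃} (ordered multiplicity list (2,2,1)). -/
/-!
The reflection of `C₅` fixing vertex `0` commutes with every matrix `reflC5 a b c p q r`. On the
odd vectors `(0, x, y, -y, -x)` such a matrix acts as `[[b, q], [q, c - r]]`, on the even vectors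
`(z, x, y, y, x)` as the Jacobi matrix `[[a, √2 p, 0], [√2 p, b, q], [0, q, c + r]]`. If the odd
block has spectrum `{λ₁, λ₂}` and the even block has spectrum `{λ₁, λ₂, λ₃}`, these eigenvalues have
multiplicities at least `2, 2, 1`, hence exactly these: eigenspaces of distinct eigenvalues are
independent and the dimension is `5`. An affine change `A ↦ αA + βI` preserves `S(C₅)`, the SSP and
multiplicities, so we may take `λ₁ = -1` and `λ₂ = 1`; the entries then come from a quadratic
equation. A matrix `X` as in the SSP is supported on the five non-edges of `C₅`, and `AX = XA`
forces `X = 0` unless `r (a - c - r) + p² = 0`, which excludes only two values of the one remaining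
free parameter.
-/

open Matrix

/-- The cycle graph `C₅` on vertices `{0,1,2,3,4}`. -/
def cycle5 : SimpleGraph (Fin 5) :=
  SimpleGraph.fromRel fun i j => (i.val, j.val) ∈ [(0,1), (1,2), (2,3), (3,4), (0,4)]

section Multiplicity

variable {m : Type*} [Fintype m] [DecidableEq m]

lemma multOf_eq_finrank_eigenspace (A : Matrix m m ℝ) (t : ℝ) :
    multOf A t = Module.finrank ℝ (Module.End.eigenspace (toLin' A) t) := by
  rw [multOf, Module.End.eigenspace_def, ← toLin'_apply', map_sub, map_smul, toLin'_one]
  rfl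

lemma iSupIndep.finrank_finset_sup {K V ι : Type*} [DivisionRing K] [AddCommGroup V] [Module K V]
    [FiniteDimensional K V] [DecidableEq ι] {W : ι → Submodule K V} (hW : iSupIndep W)
    (s : Finset ι) : Module.finrank K ↥(s.sup W) = ∑ i ∈ s, Module.finrank K (W i) := by
  induction s using Finset.induction_on with
  | empty => simp
  | insert i s hi ih =>
    have hdisj : W i ⊓ s.sup W = ⊥ := by
      rw [Finset.sup_eq_iSup]
      exact (hW.disjoint_biSup hi).eq_bot
    have h := Submodule.finrank_sup_add_finrank_inf_eq (W i) (s.sup W)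
    rw [hdisj, finrank_bot, add_zero, ih] at h
    rw [Finset.sup_insert, Finset.sum_insert hi, h]

lemma sum_multOf_le_card (A : Matrix m m ℝ) (s : Finset ℝ) :
    ∑ t ∈ s, multOf A t ≤ Fintype.card m := by
  simp_rw [multOf_eq_finrank_eigenspace]
  rw [← (Module.End.eigenspaces_iSupIndep (toLin' A)).finrank_finset_sup,
    ← Module.finrank_fintype_fun_eq_card ℝ]
  exact Submodule.finrank_le _

lemma multOf_eq_of_le_of_add_eq_card (A : Matrix m m ℝ) {l₁ l₂ l₃ : ℝ} (h₁₂ : l₁ ≠ l₂)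
    (h₁₃ : l₁ ≠ l₃) (h₂₃ : l₂ ≠ l₃) {k₁ k₂ k₃ : ℕ} (hk₁ : k₁ ≤ multOf A l₁)
    (hk₂ : k₂ ≤ multOf A l₂) (hk₃ : k₃ ≤ multOf A l₃) (hk : k₁ + k₂ + k₃ = Fintype.card m) :
    multOf A l₁ = k₁ ∧ multOf A l₂ = k₂ ∧ multOf A l₃ = k₃ ∧
      ∀ t, t ≠ l₁ → t ≠ l₂ → t ≠ l₃ → multOf A t = 0 := by
  have h₃ := sum_multOf_le_card A {l₁, l₂, l₃}
  rw [Finset.sum_insert (by simp [h₁₂, h₁₃]), Finset.sum_pair h₂₃] at h₃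
  refine ⟨by omega, by omega, by omega, fun t ht₁ ht₂ ht₃ => ?_⟩
  have h₄ := sum_multOf_le_card A {t, l₁, l₂, l₃}
  rw [Finset.sum_insert (by simp [ht₁, ht₂, ht₃]), Finset.sum_insert (by simp [h₁₂, h₁₃]),
    Finset.sum_pair h₂₃] at h₄
  omega

lemma le_multOf_of_linearIndependent (A : Matrix m m ℝ) (t : ℝ) {k : ℕ} (v : Fin k → m → ℝ)
    (hv : LinearIndependent ℝ v) (hAv : ∀ i, A *ᵥ v i = t • v i) : k ≤ multOf A t := by
  rw [multOf_eq_finrank_eigenspace]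
  have hspan : Submodule.span ℝ (Set.range v) ≤ Module.End.eigenspace (toLin' A) t := by
    rw [Submodule.span_le, Set.range_subset_iff]
    intro i
    rw [SetLike.mem_coe, Module.End.mem_eigenspace_iff, toLin'_apply, hAv]
  simpa [finrank_span_eq_card hv] using Submodule.finrank_mono hspan

end Multiplicity

section Affine

variable {m : Type*} [Fintype m] [DecidableEq m] {A : Matrix m m ℝ} {α : ℝ}

lemma InS.smul_add_smul_one {G : SimpleGraph m} (hA : InS G A) (hα : α ≠ 0) (β : ℝ) :
    InS G (α • A + β • 1) := by
  refine ⟨(hA.1.smul α).add (isSymm_one.smul β), fun i j hij => ?_⟩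
  simp [one_apply_ne hij, hα, hA.2 i j hij]

lemma HasSSP.smul_add_smul_one (hA : HasSSP A) (hα : α ≠ 0) (β : ℝ) :
    HasSSP (α • A + β • 1) := by
  intro X hX hAX hIX hcomm
  refine hA X hX ?_ hIX ?_
  · rw [add_hadamard, smul_hadamard, smul_hadamard, hIX, smul_zero, add_zero] at hAX
    exact (smul_eq_zero.mp hAX).resolve_left hα
  · have h : (α • A + β • 1) * X - X * (α • A + β • 1) = α • (A * X - X * A) := by
      simp only [Matrix.add_mul, Matrix.mul_add, Matrix.smul_mul, Matrix.mul_smul, Matrix.one_mul,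
        Matrix.mul_one, smul_sub]
      abel
    rw [h] at hcomm
    exact (smul_eq_zero.mp hcomm).resolve_left hα

lemma multOf_smul_add_smul_one (A : Matrix m m ℝ) (hα : α ≠ 0) (β t : ℝ) :
    multOf (α • A + β • 1) t = multOf A ((t - β) / α) := by
  have h : α • A + β • 1 - t • (1 : Matrix m m ℝ) = α • (A - ((t - β) / α) • 1) := by
    rw [smul_sub, smul_smul, mul_div_cancel₀ _ hα, sub_smul]
    abel
  rw [multOf, multOf, h, ← toLin'_apply', ← toLin'_apply', map_smul, LinearMap.ker_smul _ _ hα]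

end Affine

lemma exists_mem_Ioo_quadratic_ne_zero {x y : ℝ} (hxy : x < y) {A : ℝ} (hA : A ≠ 0) (B C : ℝ) :
    ∃ t ∈ Set.Ioo x y, A * t ^ 2 + B * t + C ≠ 0 := by
  by_contra! h
  have h₁ := h (x + (y - x) / 4) ⟨by linarith, by linarith⟩
  have h₂ := h (x + 2 * ((y - x) / 4)) ⟨by linarith, by linarith⟩
  have h₃ := h (x + 3 * ((y - x) / 4)) ⟨by linarith, by linarith⟩
  have h₀ : A * (2 * ((y - x) / 4) ^ 2) = 0 := by linear_combination h₁ - 2 * h₂ + h₃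
  exact hA ((mul_eq_zero.mp h₀).resolve_right (by positivity))

def reflC5 (a b c p q r : ℝ) : Matrix (Fin 5) (Fin 5) ℝ :=
  !![a, p, 0, 0, p;
     p, b, q, 0, 0;
     0, q, c, r, 0;
     0, 0, r, c, q;
     p, 0, 0, q, b]

/-- Up to sign, the characteristic polynomials of the odd and the even block of `reflC5`. -/
def reflC5OddChar (b c q r l : ℝ) : ℝ := (l - b) * (l - c + r) - q ^ 2

def reflC5EvenChar (a b c p q r l : ℝ) : ℝ :=
  (a - l) * ((l - b) * (l - c - r) - q ^ 2) + 2 * p ^ 2 * (l - c - r)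

def reflC5OddVec (b q l : ℝ) : Fin 5 → ℝ := ![0, q, l - b, b - l, -q]

def reflC5EvenVec (b c p q r l : ℝ) : Fin 5 → ℝ :=
  ![(l - b) * (l - c - r) - q ^ 2, p * (l - c - r), p * q, p * q, p * (l - c - r)]

section ReflC5

variable {a b c p q r l : ℝ}

lemma isSymm_reflC5 : (reflC5 a b c p q r).IsSymm := by
  ext i j
  fin_cases i <;> fin_cases j <;> rfl

lemma inS_reflC5 (hp : p ≠ 0) (hq : q ≠ 0) (hr : r ≠ 0) : InS cycle5 (reflC5 a b c p q r) := by
  refine ⟨isSymm_reflC5, fun i j hij => ?_⟩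
  fin_cases i <;> fin_cases j <;> simp_all [reflC5, cycle5]

lemma hasSSP_reflC5 (hp : p ≠ 0) (hq : q ≠ 0) (hr : r ≠ 0) (hK : r * (a - c - r) + p ^ 2 ≠ 0) :
    HasSSP (reflC5 a b c p q r) := by
  intro X hX hAX hIX hcomm
  have hdiag : ∀ i, X i i = 0 := fun i => by simpa using congrFun₂ hIX i i
  have hedge : ∀ i j, reflC5 a b c p q r i j ≠ 0 → X i j = 0 := fun i j h =>
    (mul_eq_zero.mp (congrFun₂ hAX i j)).resolve_left h
  obtain ⟨α, β, γ, δ, ε, rfl⟩ : ∃ α β γ δ ε : ℝ, X =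
      !![0, 0, α, β, 0;
         0, 0, 0, γ, δ;
         α, 0, 0, 0, ε;
         β, γ, 0, 0, 0;
         0, δ, ε, 0, 0] := by
    refine ⟨X 0 2, X 0 3, X 1 3, X 1 4, X 2 4, ?_⟩
    ext i j
    fin_cases i <;> fin_cases j <;>
      first
        | exact hdiag _
        | exact hedge _ _ (by simpa [reflC5])
        | exact hX.apply _ _
        | rfl
  have e01 : p * δ - α * q = 0 := by simpa [reflC5] using congrFun₂ hcomm 0 1
  have e04 : p * δ - β * q = 0 := by simpa [reflC5] using congrFun₂ hcomm 0 4
  have e02 : a * α + p * ε - (α * c + β * r) = 0 := by simpa [reflC5] using congrFun₂ hcomm 0 2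
  have e03 : a * β + p * γ - (α * r + β * c) = 0 := by simpa [reflC5] using congrFun₂ hcomm 0 3
  have e12 : p * α - γ * r = 0 := by simpa [reflC5] using congrFun₂ hcomm 1 2
  obtain rfl : α = β := mul_left_cancel₀ hq (by linear_combination e04 - e01)
  obtain rfl : γ = ε := mul_left_cancel₀ hp (by linear_combination e03 - e02)
  obtain rfl : α = 0 := by
    refine (mul_eq_zero.mp ?_).resolve_left hK
    linear_combination r * e02 + p * e12
  obtain rfl : γ = 0 := (mul_eq_zero.mp (by linear_combination -e12 : γ * r = 0)).resolve_right hr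
  obtain rfl : δ = 0 := (mul_eq_zero.mp (by linear_combination e01 : p * δ = 0)).resolve_left hp
  ext i j
  fin_cases i <;> fin_cases j <;> rfl

lemma reflC5_mulVec_oddVec (h : reflC5OddChar b c q r l = 0) :
    reflC5 a b c p q r *ᵥ reflC5OddVec b q l = l • reflC5OddVec b q l := by
  unfold reflC5OddChar at h
  ext i
  fin_cases i <;>
    simp only [reflC5, reflC5OddVec, mulVec_cons, mulVec_empty, Pi.add_apply, Pi.smul_apply,
      Pi.zero_apply, smul_eq_mul, cons_val, cons_val_zero, cons_val_one, head_cons, tail_cons,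
      Function.comp_apply, Fin.zero_eta, Fin.mk_one, Fin.reduceFinMk] <;>
    first | linear_combination | linear_combination h | linear_combination -h

lemma reflC5_mulVec_evenVec (h : reflC5EvenChar a b c p q r l = 0) :
    reflC5 a b c p q r *ᵥ reflC5EvenVec b c p q r l = l • reflC5EvenVec b c p q r l := by
  unfold reflC5EvenChar at h
  ext i
  fin_cases i <;>
    simp only [reflC5, reflC5EvenVec, mulVec_cons, mulVec_empty, Pi.add_apply, Pi.smul_apply,
      Pi.zero_apply, smul_eq_mul, cons_val, cons_val_zero, cons_val_one, head_cons, tail_cons,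
      Function.comp_apply, Fin.zero_eta, Fin.mk_one, Fin.reduceFinMk] <;>
    first | linear_combination | linear_combination h

lemma one_le_multOf_reflC5 (hp : p ≠ 0) (hq : q ≠ 0) (h : reflC5EvenChar a b c p q r l = 0) :
    1 ≤ multOf (reflC5 a b c p q r) l := by
  refine le_multOf_of_linearIndependent _ l ![reflC5EvenVec b c p q r l] ?_
    (Fin.forall_fin_one.2 (reflC5_mulVec_evenVec h))
  rw [linearIndependent_unique_iff]
  intro h0
  simpa [reflC5EvenVec, hp, hq] using congrFun h0 2

lemma two_le_multOf_reflC5 (hp : p ≠ 0) (hq : q ≠ 0) (hodd : reflC5OddChar b c q r l = 0)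
    (heven : reflC5EvenChar a b c p q r l = 0) : 2 ≤ multOf (reflC5 a b c p q r) l := by
  refine le_multOf_of_linearIndependent _ l ![reflC5OddVec b q l, reflC5EvenVec b c p q r l] ?_
    (Fin.forall_fin_two.2 ⟨reflC5_mulVec_oddVec hodd, reflC5_mulVec_evenVec heven⟩)
  have hlb : l - b ≠ 0 := by
    intro h
    simp [reflC5OddChar, h, hq] at hodd
  rw [LinearIndependent.pair_iff]
  intro s t hst
  have h₂ : s * (l - b) + t * (p * q) = 0 := by
    simpa [reflC5OddVec, reflC5EvenVec] using congrFun hst 2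
  have h₃ : s * (b - l) + t * (p * q) = 0 := by
    simpa [reflC5OddVec, reflC5EvenVec] using congrFun hst 3
  have ht : t * (p * q) = 0 := by linear_combination (h₂ + h₃) / 2
  have hs : s * (l - b) = 0 := by linear_combination (h₂ - h₃) / 2
  exact ⟨(mul_eq_zero.mp hs).resolve_right hlb,
    (mul_eq_zero.mp ht).resolve_right (mul_ne_zero hp hq)⟩

lemma multOf_reflC5 (hp : p ≠ 0) (hq : q ≠ 0) {l₁ l₂ l₃ : ℝ} (h₁₂ : l₁ ≠ l₂) (h₁₃ : l₁ ≠ l₃)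
    (h₂₃ : l₂ ≠ l₃) (hodd₁ : reflC5OddChar b c q r l₁ = 0) (hodd₂ : reflC5OddChar b c q r l₂ = 0)
    (heven₁ : reflC5EvenChar a b c p q r l₁ = 0) (heven₂ : reflC5EvenChar a b c p q r l₂ = 0)
    (heven₃ : reflC5EvenChar a b c p q r l₃ = 0) :
    multOf (reflC5 a b c p q r) l₁ = 2 ∧ multOf (reflC5 a b c p q r) l₂ = 2 ∧
      multOf (reflC5 a b c p q r) l₃ = 1 ∧
      ∀ t, t ≠ l₁ → t ≠ l₂ → t ≠ l₃ → multOf (reflC5 a b c p q r) t = 0 :=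
  multOf_eq_of_le_of_add_eq_card _ h₁₂ h₁₃ h₂₃ (two_le_multOf_reflC5 hp hq hodd₁ heven₁)
    (two_le_multOf_reflC5 hp hq hodd₂ heven₂) (one_le_multOf_reflC5 hp hq heven₃) rfl

/-- With `c = r - b` and `q² = 1 - b²` the odd block has spectrum `{-1, 1}`; the even block then has
spectrum `{-1, 1, e}` iff `a = e - 2r`, `p² = r (a + b)` and `(b, r)` lies on the conic `hconic`.
For `b` close to `1` the conic has a point with `r > 0`, and `5b² - 2eb + 2e² - 9 ≠ 0` rules out
`e + b = 3r`, the failure of the SSP condition. -/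
lemma exists_reflC5_params_of_one_lt {e : ℝ} (he : 1 < e) :
    ∃ a b c p q r : ℝ, p ≠ 0 ∧ q ≠ 0 ∧ r ≠ 0 ∧ r * (a - c - r) + p ^ 2 ≠ 0 ∧
      reflC5OddChar b c q r (-1) = 0 ∧ reflC5OddChar b c q r 1 = 0 ∧
      reflC5EvenChar a b c p q r (-1) = 0 ∧ reflC5EvenChar a b c p q r 1 = 0 ∧
      reflC5EvenChar a b c p q r e = 0 := by
  obtain ⟨b, ⟨hb_lo, hb₁⟩, hg⟩ := exists_mem_Ioo_quadratic_ne_zero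
    (x := max 0 (1 - (e - 1) ^ 2 / 8)) (y := 1) (max_lt (by norm_num) (by nlinarith))
    (A := 5) (by norm_num) (-2 * e) (2 * e ^ 2 - 9)
  obtain ⟨hb₀, hb_near⟩ := max_lt_iff.mp hb_lo
  have hD : 0 < 5 * b ^ 2 - 2 * e * b + e ^ 2 - 4 := by nlinarith
  obtain ⟨s, hs, hs₀⟩ : ∃ s, s ^ 2 = 5 * b ^ 2 - 2 * e * b + e ^ 2 - 4 ∧ 0 ≤ s :=
    ⟨_, Real.sq_sqrt hD.le, Real.sqrt_nonneg _⟩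
  obtain ⟨r, hr⟩ : ∃ r, 4 * r = e + 3 * b - s := ⟨_, mul_div_cancel₀ _ four_ne_zero⟩
  have hconic : 4 * r ^ 2 - (6 * b + 2 * e) * r + b ^ 2 + 2 * e * b + 1 = 0 := by
    linear_combination (4 * r - e - 3 * b - s) / 4 * hr + hs / 4
  have hr₀ : 0 < r := by
    have hs_lt : s < e + 3 * b := lt_of_pow_lt_pow_left₀ 2 (by positivity) (by nlinarith)
    linarith
  have hw₀ : 0 < e - 2 * r + b := by linarith
  obtain ⟨q, hq, hq₀⟩ : ∃ q, q ^ 2 = 1 - b ^ 2 ∧ 0 < q :=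
    ⟨_, Real.sq_sqrt (by nlinarith), Real.sqrt_pos.mpr (by nlinarith)⟩
  obtain ⟨p, hp, hp₀⟩ : ∃ p, p ^ 2 = r * (e - 2 * r + b) ∧ 0 < p :=
    ⟨_, Real.sq_sqrt (by positivity), Real.sqrt_pos.mpr (by positivity)⟩
  refine ⟨e - 2 * r, b, r - b, p, q, r, hp₀.ne', hq₀.ne', hr₀.ne', ?_, ?_, ?_, ?_, ?_, ?_⟩
  · intro hK
    have h3r : e + b - 3 * r = 0 := by
      have h : (2 * r) * (e + b - 3 * r) = 0 := by linear_combination hK - hp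
      exact (mul_eq_zero.mp h).resolve_left (by positivity)
    apply hg
    linear_combination (-9) * hconic - (12 * r - 2 * e - 14 * b) * h3r
  all_goals simp only [reflC5OddChar, reflC5EvenChar]
  · linear_combination -hq
  · linear_combination -hq
  · linear_combination 2 * (-1 - 2 * r + b) * hp - (e - 2 * r + 1) * hq + 2 * r * hconic
  · linear_combination 2 * (1 - 2 * r + b) * hp - (e - 2 * r - 1) * hq + 2 * r * hconic
  · linear_combination 2 * (e - 2 * r + b) * hp - (- 2 * r) * hq + 2 * r * hconic

end ReflC5

/-- For all `λ₁ < λ₂ < λ₃` there is an SSP matrix in `S(C₅)` with spectrum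
`{λ₁, λ₁, λ₂, λ₂, λ₃}` (ordered multiplicity list `(2,2,1)`). -/
theorem c5_oml221_spectrally_arbitrary_SSP (l1 l2 l3 : ℝ)
    (h12 : l1 < l2) (h23 : l2 < l3) :
    ∃ A : Matrix (Fin 5) (Fin 5) ℝ, InS cycle5 A ∧ HasSSP A ∧
      multOf A l1 = 2 ∧ multOf A l2 = 2 ∧ multOf A l3 = 1 ∧
      ∀ t, t ≠ l1 → t ≠ l2 → t ≠ l3 → multOf A t = 0 := by
  have hl : 0 < l2 - l1 := sub_pos.mpr h12
  set α := (l2 - l1) / 2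
  set β := (l1 + l2) / 2
  have hα : α ≠ 0 := (half_pos hl).ne'
  set f : ℝ → ℝ := fun t => (t - β) / α
  have hf : f.Injective := fun s t h => by simpa [f, hα] using h
  have hf₁ : f l1 = -1 := by simp only [f, α, β]; field_simp; ring
  have hf₂ : f l2 = 1 := by simp only [f, α, β]; field_simp; ring
  have hf₃ : 1 < f l3 := by simp only [f, α, β]; rw [lt_div_iff₀ (half_pos hl)]; linarith
  obtain ⟨a, b, c, p, q, r, hp, hq, hr, hK, hodd₁, hodd₂, heven₁, heven₂, heven₃⟩ :=
    exists_reflC5_params_of_one_lt hf₃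
  rw [← hf₁] at hodd₁ heven₁
  rw [← hf₂] at hodd₂ heven₂
  obtain ⟨h₁, h₂, h₃, h₀⟩ := multOf_reflC5 hp hq (hf.ne h12.ne) (hf.ne (h12.trans h23).ne)
    (hf.ne h23.ne) hodd₁ hodd₂ heven₁ heven₂ heven₃
  have hmult := multOf_smul_add_smul_one (reflC5 a b c p q r) hα β
  exact ⟨α • reflC5 a b c p q r + β • 1, (inS_reflC5 hp hq hr).smul_add_smul_one hα β,
    (hasSSP_reflC5 hp hq hr hK).smul_add_smul_one hα β, (hmult l1).trans h₁, (hmult l2).trans h₂,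
    (hmult l3).trans h₃,
    fun t ht₁ ht₂ ht₃ => (hmult t).trans (h₀ _ (hf.ne ht₁) (hf.ne ht₂) (hf.ne ht₃))⟩
end

section
/- Let K_{2,3} denote the complete bipartite graph on vertices {1,2,3,4,5} with parts {1,2} and {3,4,5}. For all real numbers λ₁ < λ₂ < λ₃, there exists a matrix A ∈ S(K_{2,3}) that has the Strong Spectral Property and whose spectrum is the multiset {λ₁, λ₂, λ₂, λ₂, λ₃} (ordered multiplicity list (1,3,1)). -/
open Matrix

/-- The complete bipartite graph `K_{2,3}` on vertices `{0,1,2,3,4}` with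
parts `{0,1}` and `{2,3,4}`. -/
def bip23 : SimpleGraph (Fin 5) :=
  SimpleGraph.fromRel fun i j => i.val ≤ 1 ∧ 2 ≤ j.val

/-!
Every matrix with simple eigenvalues `λ₁ < λ₃` and a triple eigenvalue `λ₂` has the form
`λ₂ I + x xᵀ - y yᵀ` with `x ⊥ y`, `|x|² = λ₃ - λ₂`, `|y|² = λ₂ - λ₁`. Taking
`x = (u₁, u₂, c, c, c)` and `y = (v₁, v₂, c, c, c)` makes every entry inside the part `{2, 3, 4}`
vanish, `u₁ u₂ = v₁ v₂` kills the entry `(0, 1)`, and the edge entries are `k₀ = c (u₁ - v₁)` in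
row `0` and `k₁ = c (u₂ - v₂)` in row `1`. If `X` is symmetric, vanishes on the diagonal and the
edges, and commutes with `A`, then the `(0, j)` entries of `AX = XA` force all row sums of `X` on
`{2, 3, 4}` to equal one `s` with `k₀ s = k₁ X₀₁` and `k₁ s = k₀ X₀₁`; so `k₀² ≠ k₁²` gives `X = 0`.
The parameters come from a one-parameter family of solutions, except when `λ₂ - λ₁ = λ₃ - λ₂`,
where that family violates `k₀² ≠ k₁²` and `y = -x` on the first two coordinates is used instead.
-/

lemma dotProduct_self_pos {n : Type*} [Fintype n] {v : n → ℝ} (hv : v ≠ 0) : 0 < v ⬝ᵥ v :=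
  (Finset.sum_nonneg fun i _ => mul_self_nonneg (v i)).lt_of_ne
    (Ne.symm (dotProduct_self_eq_zero.not.mpr hv))

lemma multOf_neg {n : Type*} [Fintype n] [DecidableEq n] (A : Matrix n n ℝ) (t : ℝ) :
    multOf (-A) t = multOf A (-t) := by
  have h : -A - t • (1 : Matrix n n ℝ) = -(A - (-t) • 1) := by module
  have h' : (-(A - (-t) • 1)).mulVecLin = -(A - (-t) • 1).mulVecLin :=
    LinearMap.ext fun w => neg_mulVec w _
  rw [multOf, multOf, h, h', LinearMap.ker_neg]

section RankTwoUpdate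

variable {n : Type*} [DecidableEq n]

def rankTwoUpdate (μ : ℝ) (x y : n → ℝ) : Matrix n n ℝ :=
  μ • 1 + vecMulVec x x - vecMulVec y y

variable (μ : ℝ) (x y : n → ℝ)

lemma rankTwoUpdate_isSymm : (rankTwoUpdate μ x y).IsSymm := by
  simp only [rankTwoUpdate, IsSymm, transpose_sub, transpose_add, transpose_smul,
    transpose_one, transpose_vecMulVec]

lemma rankTwoUpdate_apply_of_ne {i j : n} (h : i ≠ j) :
    rankTwoUpdate μ x y i j = x i * x j - y i * y j := by
  simp [rankTwoUpdate, vecMulVec_apply, one_apply_ne h]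

lemma rankTwoUpdate_neg : rankTwoUpdate (-μ) y x = -rankTwoUpdate μ x y := by
  unfold rankTwoUpdate; module

variable [Fintype n]

lemma rankTwoUpdate_sub_smul_mulVec (t : ℝ) (w : n → ℝ) :
    (rankTwoUpdate μ x y - t • 1) *ᵥ w = (μ - t) • w + (x ⬝ᵥ w) • x - (y ⬝ᵥ w) • y := by
  have h : rankTwoUpdate μ x y - t • 1 = (μ - t) • 1 + vecMulVec x x - vecMulVec y y := by
    unfold rankTwoUpdate; module
  rw [h, sub_mulVec, add_mulVec, smul_mulVec, one_mulVec, vecMulVec_mulVec, vecMulVec_mulVec,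
    op_smul_eq_smul, op_smul_eq_smul]

variable {μ x y}

lemma dotProduct_eq_zero_of_mem_ker (hxy : x ⬝ᵥ y = 0) {t : ℝ} {w : n → ℝ}
    (hw : (rankTwoUpdate μ x y - t • 1) *ᵥ w = 0) :
    (μ + x ⬝ᵥ x - t) * (x ⬝ᵥ w) = 0 ∧ (μ - y ⬝ᵥ y - t) * (y ⬝ᵥ w) = 0 := by
  rw [rankTwoUpdate_sub_smul_mulVec] at hw
  have hx := congrArg (x ⬝ᵥ ·) hw
  have hy := congrArg (y ⬝ᵥ ·) hw
  simp only [dotProduct_add, dotProduct_sub, dotProduct_smul, smul_eq_mul, dotProduct_zero,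
    hxy, dotProduct_comm y x] at hx hy
  exact ⟨by linear_combination hx, by linear_combination hy⟩

lemma multOf_rankTwoUpdate_eq_zero (hxy : x ⬝ᵥ y = 0) {t : ℝ} (ht : t ≠ μ)
    (htx : t ≠ μ + x ⬝ᵥ x) (hty : t ≠ μ - y ⬝ᵥ y) : multOf (rankTwoUpdate μ x y) t = 0 := by
  rw [multOf, Submodule.finrank_eq_zero, eq_bot_iff]
  intro w hw
  rw [LinearMap.mem_ker, mulVecLin_apply] at hw
  obtain ⟨hxw, hyw⟩ := dotProduct_eq_zero_of_mem_ker hxy hw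
  replace hxw := (mul_eq_zero.mp hxw).resolve_left (sub_ne_zero.mpr htx.symm)
  replace hyw := (mul_eq_zero.mp hyw).resolve_left (sub_ne_zero.mpr hty.symm)
  rw [rankTwoUpdate_sub_smul_mulVec, hxw, hyw, zero_smul, zero_smul, add_zero, sub_zero,
    smul_eq_zero] at hw
  exact hw.resolve_left (sub_ne_zero.mpr ht.symm)

lemma multOf_rankTwoUpdate_add_dotProduct_self (hxy : x ⬝ᵥ y = 0) (hx : x ≠ 0) :
    multOf (rankTwoUpdate μ x y) (μ + x ⬝ᵥ x) = 1 := by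
  have hxx := dotProduct_self_pos hx
  have hyy : 0 ≤ y ⬝ᵥ y := Finset.sum_nonneg fun i _ => mul_self_nonneg (y i)
  suffices LinearMap.ker (rankTwoUpdate μ x y - (μ + x ⬝ᵥ x) • 1).mulVecLin = ℝ ∙ x by
    rw [multOf, this, finrank_span_singleton hx]
  apply le_antisymm
  · intro w hw
    rw [LinearMap.mem_ker, mulVecLin_apply] at hw
    have hyw := (mul_eq_zero.mp (dotProduct_eq_zero_of_mem_ker hxy hw).2).resolve_left
      (by linarith)
    rw [rankTwoUpdate_sub_smul_mulVec, hyw, zero_smul, sub_zero] at hw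
    refine Submodule.mem_span_singleton.mpr ⟨(x ⬝ᵥ w) / (x ⬝ᵥ x), ?_⟩
    have hw' : (x ⬝ᵥ x) • w = (x ⬝ᵥ w) • x := by linear_combination (norm := module) -hw
    rw [div_eq_inv_mul, mul_smul, ← hw', inv_smul_smul₀ hxx.ne']
  · rw [Submodule.span_singleton_le_iff_mem, LinearMap.mem_ker, mulVecLin_apply,
      rankTwoUpdate_sub_smul_mulVec, dotProduct_comm y x, hxy]
    module

lemma multOf_rankTwoUpdate_sub_dotProduct_self (hxy : x ⬝ᵥ y = 0) (hy : y ≠ 0) :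
    multOf (rankTwoUpdate μ x y) (μ - y ⬝ᵥ y) = 1 := by
  rw [← neg_neg μ, rankTwoUpdate_neg, multOf_neg, neg_sub, neg_neg, sub_eq_neg_add]
  exact multOf_rankTwoUpdate_add_dotProduct_self (by rwa [dotProduct_comm]) hy

lemma multOf_rankTwoUpdate_self (hxy : x ⬝ᵥ y = 0) (hx : x ≠ 0) (hy : y ≠ 0) :
    multOf (rankTwoUpdate μ x y) μ = Fintype.card n - 2 := by
  have hxx := dotProduct_self_pos hx
  have hyy := dotProduct_self_pos hy
  set M : Matrix (Fin 2) n ℝ := of ![x, y]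
  have hM (w : n → ℝ) : M *ᵥ w = ![x ⬝ᵥ w, y ⬝ᵥ w] := by
    ext i; fin_cases i <;> rfl
  have hker : LinearMap.ker (rankTwoUpdate μ x y - μ • 1).mulVecLin =
      LinearMap.ker M.mulVecLin := by
    ext w
    simp only [LinearMap.mem_ker, mulVecLin_apply, hM]
    constructor
    · intro hw
      obtain ⟨hxw, hyw⟩ := dotProduct_eq_zero_of_mem_ker hxy hw
      rw [add_sub_cancel_left, mul_eq_zero] at hxw
      rw [sub_sub_cancel_left, mul_eq_zero, neg_eq_zero] at hyw
      rw [hxw.resolve_left hxx.ne', hyw.resolve_left hyy.ne']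
      simp
    · intro hw
      have hxw : x ⬝ᵥ w = 0 := by simpa using congrFun hw 0
      have hyw : y ⬝ᵥ w = 0 := by simpa using congrFun hw 1
      rw [rankTwoUpdate_sub_smul_mulVec, hxw, hyw, sub_self]
      simp
  have hrange : LinearMap.range M.mulVecLin = ⊤ := by
    refine LinearMap.range_eq_top.mpr fun z => ⟨(z 0 / (x ⬝ᵥ x)) • x + (z 1 / (y ⬝ᵥ y)) • y, ?_⟩
    rw [mulVecLin_apply, hM]
    ext i
    fin_cases i <;>
      simp [dotProduct_add, dotProduct_smul, hxy, dotProduct_comm y x, hxx.ne', hyy.ne']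
  have := LinearMap.finrank_range_add_finrank_ker M.mulVecLin
  rw [hrange, finrank_top, Module.finrank_fin_fun, Module.finrank_fintype_fun_eq_card] at this
  rw [multOf, hker]
  omega

end RankTwoUpdate

lemma hasSSP_of_rows_const (A : Matrix (Fin 5) (Fin 5) ℝ) {k₀ k₁ : ℝ}
    (hA₀ : ∀ j : Fin 5, 2 ≤ j.val → A 0 j = k₀) (hA₁ : ∀ j : Fin 5, 2 ≤ j.val → A 1 j = k₁)
    (hk₀ : k₀ ≠ 0) (hk₁ : k₁ ≠ 0) (hk : k₀ ^ 2 ≠ k₁ ^ 2) : HasSSP A := by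
  intro X hX hAX hIX hcomm
  have hsymm (i j : Fin 5) : X j i = X i j := congrFun (congrFun hX i) j
  have hdiag (i : Fin 5) : X i i = 0 := by simpa using congrFun (congrFun hIX i) i
  have hedge (i j : Fin 5) (h : A i j ≠ 0) : X i j = 0 := by
    simpa [h] using congrFun (congrFun hAX i) j
  have hX₀ (j : Fin 5) (hj : 2 ≤ j.val) : X 0 j = 0 := hedge 0 j (by rwa [hA₀ j hj])
  have hX₁ (j : Fin 5) (hj : 2 ≤ j.val) : X 1 j = 0 := hedge 1 j (by rwa [hA₁ j hj])
  have hXform : X = !![0, X 0 1, 0, 0, 0; X 0 1, 0, 0, 0, 0; 0, 0, 0, X 2 3, X 2 4;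
      0, 0, X 2 3, 0, X 3 4; 0, 0, X 2 4, X 3 4, 0] := by
    ext i j
    fin_cases i <;> fin_cases j <;>
      simp only [Fin.reduceFinMk, Fin.zero_eta, Fin.mk_one, Fin.isValue, hdiag, of_apply, cons_val',
        cons_val, cons_val_fin_one, cons_val_one, cons_val_zero] <;>
      first
        | exact hdiag _
        | exact hX₀ _ (by decide)
        | exact hX₁ _ (by decide)
        | exact (hsymm _ _).trans (hX₀ _ (by decide))
        | exact (hsymm _ _).trans (hX₁ _ (by decide))
        | exact hsymm _ _
  set a := X 0 1
  set p := X 2 3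
  set q := X 2 4
  set r := X 3 4
  have hentry (i j : Fin 5) := congrFun (congrFun hcomm i) j
  rw [hXform] at hentry
  have e₀₂ : k₀ * p + k₀ * q - a * k₁ = 0 := by
    simpa [mul_apply, vecMul, dotProduct, Fin.sum_univ_five, hA₀, hA₁] using hentry 0 2
  have e₀₃ : k₀ * p + k₀ * r - a * k₁ = 0 := by
    simpa [mul_apply, vecMul, dotProduct, Fin.sum_univ_five, hA₀, hA₁] using hentry 0 3
  have e₀₄ : k₀ * q + k₀ * r - a * k₁ = 0 := by
    simpa [mul_apply, vecMul, dotProduct, Fin.sum_univ_five, hA₀, hA₁] using hentry 0 4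
  have e₁₂ : k₁ * p + k₁ * q - a * k₀ = 0 := by
    simpa [mul_apply, vecMul, dotProduct, Fin.sum_univ_five, hA₀, hA₁] using hentry 1 2
  have hqr : q = r := mul_left_cancel₀ hk₀ (by linear_combination e₀₂ - e₀₃)
  have hpr : p = r := mul_left_cancel₀ hk₀ (by linear_combination e₀₂ - e₀₄)
  rw [hpr, hqr] at e₀₂ e₁₂
  have hr : r = 0 := by
    have h : r * (2 * (k₀ ^ 2 - k₁ ^ 2)) = 0 := by linear_combination k₀ * e₀₂ - k₁ * e₁₂
    exact (mul_eq_zero.mp h).resolve_right (mul_ne_zero two_ne_zero (sub_ne_zero.mpr hk))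
  have ha : a = 0 := by
    rw [hr] at e₀₂
    exact (mul_eq_zero.mp (by linear_combination -e₀₂ : a * k₁ = 0)).resolve_right hk₁
  rw [hXform, ha, hpr, hqr, hr]
  ext i j
  fin_cases i <;> fin_cases j <;> rfl

def k23Vec (a b c : ℝ) : Fin 5 → ℝ := ![a, b, c, c, c]

lemma k23Vec_dotProduct (a b c a' b' c' : ℝ) :
    k23Vec a b c ⬝ᵥ k23Vec a' b' c' = a * a' + b * b' + 3 * (c * c') := by
  simp only [k23Vec, dotProduct, Fin.sum_univ_five, Fin.isValue, cons_val_zero, cons_val_one,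
    cons_val]
  ring

lemma k23Vec_apply_of_two_le (a b c : ℝ) {j : Fin 5} (hj : 2 ≤ j.val) : k23Vec a b c j = c := by
  fin_cases j <;> first | rfl | simp at hj

lemma k23Vec_ne_zero (a b : ℝ) {c : ℝ} (hc : c ≠ 0) : k23Vec a b c ≠ 0 :=
  fun h => hc (congrFun h 2)

/-- Conditions on `x = (u₁, u₂, c, c, c)` and `y = (v₁, v₂, c, c, c)` making
`μ I + x xᵀ - y yᵀ` an SSP matrix in `S(K_{2,3})` with spectrum `{μ - α, μ, μ, μ, μ + β}`. -/
structure K23Params (α β u₁ u₂ v₁ v₂ c : ℝ) : Prop where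
  mul_eq : u₁ * u₂ = v₁ * v₂
  orthogonal : u₁ * v₁ + u₂ * v₂ + 3 * c ^ 2 = 0
  sq_norm_u : u₁ ^ 2 + u₂ ^ 2 + 3 * c ^ 2 = β
  sq_norm_v : v₁ ^ 2 + v₂ ^ 2 + 3 * c ^ 2 = α
  c_ne_zero : c ≠ 0
  ne₁ : u₁ ≠ v₁
  ne₂ : u₂ ≠ v₂
  sq_sub_ne : (u₁ - v₁) ^ 2 ≠ (u₂ - v₂) ^ 2

namespace K23Params

variable {α β u₁ u₂ v₁ v₂ c : ℝ}

lemma dotProduct_eq_zero (hp : K23Params α β u₁ u₂ v₁ v₂ c) :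
    k23Vec u₁ u₂ c ⬝ᵥ k23Vec v₁ v₂ c = 0 := by
  rw [k23Vec_dotProduct]; linear_combination hp.orthogonal

lemma dotProduct_self_u (hp : K23Params α β u₁ u₂ v₁ v₂ c) :
    k23Vec u₁ u₂ c ⬝ᵥ k23Vec u₁ u₂ c = β := by
  rw [k23Vec_dotProduct]; linear_combination hp.sq_norm_u

lemma dotProduct_self_v (hp : K23Params α β u₁ u₂ v₁ v₂ c) :
    k23Vec v₁ v₂ c ⬝ᵥ k23Vec v₁ v₂ c = α := by
  rw [k23Vec_dotProduct]; linear_combination hp.sq_norm_v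

lemma inS_bip23 (hp : K23Params α β u₁ u₂ v₁ v₂ c) (μ : ℝ) :
    InS bip23 (rankTwoUpdate μ (k23Vec u₁ u₂ c) (k23Vec v₁ v₂ c)) := by
  refine ⟨rankTwoUpdate_isSymm _ _ _, fun i j hij => ?_⟩
  have k₀ : u₁ * c - v₁ * c ≠ 0 := by
    rw [← sub_mul]; exact mul_ne_zero (sub_ne_zero.mpr hp.ne₁) hp.c_ne_zero
  have k₁ : u₂ * c - v₂ * c ≠ 0 := by
    rw [← sub_mul]; exact mul_ne_zero (sub_ne_zero.mpr hp.ne₂) hp.c_ne_zero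
  rw [rankTwoUpdate_apply_of_ne _ _ _ hij, bip23, SimpleGraph.fromRel_adj]
  fin_cases i <;> fin_cases j <;> simp [k23Vec, k₀, k₁, hp.mul_eq, mul_comm] at hij ⊢

lemma hasSSP (hp : K23Params α β u₁ u₂ v₁ v₂ c) (μ : ℝ) :
    HasSSP (rankTwoUpdate μ (k23Vec u₁ u₂ c) (k23Vec v₁ v₂ c)) := by
  have hrow (i : Fin 5) (hi : i.val ≤ 1) (j : Fin 5) (hj : 2 ≤ j.val) :
      rankTwoUpdate μ (k23Vec u₁ u₂ c) (k23Vec v₁ v₂ c) i j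
        = (k23Vec u₁ u₂ c i - k23Vec v₁ v₂ c i) * c := by
    rw [rankTwoUpdate_apply_of_ne _ _ _ (Fin.ne_of_lt (by omega)), k23Vec_apply_of_two_le _ _ _ hj,
      k23Vec_apply_of_two_le _ _ _ hj, sub_mul]
  refine hasSSP_of_rows_const _ (hrow 0 (by decide)) (hrow 1 (by decide))
    (mul_ne_zero (sub_ne_zero.mpr hp.ne₁) hp.c_ne_zero)
    (mul_ne_zero (sub_ne_zero.mpr hp.ne₂) hp.c_ne_zero) ?_
  simp only [k23Vec, mul_pow]
  exact (mul_left_injective₀ (pow_ne_zero 2 hp.c_ne_zero)).ne hp.sq_sub_ne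

lemma exists_of_eq {β : ℝ} (hβ : 0 < β) : ∃ u₁ u₂ v₁ v₂ c, K23Params β β u₁ u₂ v₁ v₂ c := by
  set s := √(β / 6)
  have hs : 0 < s := Real.sqrt_pos.mpr (by positivity)
  have hs2 : s ^ 2 = β / 6 := Real.sq_sqrt (by positivity)
  have h2 : √2 ^ 2 = 2 := Real.sq_sqrt (by norm_num)
  refine ⟨s, √2 * s, -s, -(√2 * s), s, ⟨by ring, by linear_combination (-s ^ 2) * h2, ?_, ?_,
    hs.ne', by linarith, by nlinarith, ?_⟩⟩
  · linear_combination s ^ 2 * h2 + 6 * hs2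
  · linear_combination s ^ 2 * h2 + 6 * hs2
  · intro h; nlinarith

lemma exists_of_ne {α β : ℝ} (hα : 0 < α) (hβ : 0 < β) (hne : α ≠ β) :
    ∃ u₁ u₂ v₁ v₂ c, K23Params α β u₁ u₂ v₁ v₂ c := by
  obtain ⟨t, ht, htα, htβ⟩ : ∃ t : ℝ, 1 < t ∧ β < t * α ∧ α < t * β := by
    have hαβ : 0 < α / β := by positivity
    have hβα : 0 < β / α := by positivity
    refine ⟨1 + α / β + β / α, by linarith, ?_, ?_⟩
    · have : 0 < α / β * α := by positivity
      rw [add_mul, add_mul, div_mul_cancel₀ β hα.ne']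
      linarith
    · have : 0 < β / α * β := by positivity
      rw [add_mul, add_mul, div_mul_cancel₀ α hβ.ne']
      linarith
  have hD : 0 < (t - 1) * (t + 1) ^ 2 := by
    have : 0 < t - 1 := by linarith
    positivity
  -- `u = (a, t b)`, `v = (-t a, -b)` with `a² = P`, `b² = R` turns the norm conditions into
  -- `(1 + t) (P + t R) = β` and `(1 + t) (t P + R) = α`.
  set P := (t * α - β) / ((t - 1) * (t + 1) ^ 2)
  set R := (t * β - α) / ((t - 1) * (t + 1) ^ 2)
  have hP : 0 < P := div_pos (by linarith) hD
  have hR : 0 < R := div_pos (by linarith) hD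
  have hPR : P ≠ R := by
    rw [Ne, div_left_inj' hD.ne']
    intro h
    exact hne (by nlinarith)
  set a := √P
  set b := √R
  set c := √(t * (P + R) / 3)
  have ha : a ^ 2 = P := Real.sq_sqrt hP.le
  have hb : b ^ 2 = R := Real.sq_sqrt hR.le
  have hc : c ^ 2 = t * (P + R) / 3 := Real.sq_sqrt (by positivity)
  have ha0 : 0 < a := Real.sqrt_pos.mpr hP
  have hb0 : 0 < b := Real.sqrt_pos.mpr hR
  refine ⟨a, t * b, -t * a, -b, c, ⟨by ring, ?_, ?_, ?_, (Real.sqrt_pos.mpr (by positivity)).ne',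
    by nlinarith, by nlinarith, ?_⟩⟩
  · linear_combination (-t) * ha + (-t) * hb + 3 * hc
  · have : P + t ^ 2 * R + t * (P + R) = β := by
      simp only [P, R]; field_simp [(by linarith : t - 1 ≠ 0)]; ring
    linear_combination ha + t ^ 2 * hb + 3 * hc + this
  · have : t ^ 2 * P + R + t * (P + R) = α := by
      simp only [P, R]; field_simp [(by linarith : t - 1 ≠ 0)]; ring
    linear_combination t ^ 2 * ha + hb + 3 * hc + this
  · intro h
    refine hPR (mul_left_cancel₀ (pow_ne_zero 2 (by linarith : t + 1 ≠ 0)) ?_)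
    linear_combination h - (t + 1) ^ 2 * ha + (t + 1) ^ 2 * hb

lemma exists_of_pos {α β : ℝ} (hα : 0 < α) (hβ : 0 < β) :
    ∃ u₁ u₂ v₁ v₂ c, K23Params α β u₁ u₂ v₁ v₂ c := by
  rcases eq_or_ne α β with rfl | hne
  · exact exists_of_eq hβ
  · exact exists_of_ne hα hβ hne

end K23Params

/-- For all `λ₁ < λ₂ < λ₃` there is an SSP matrix in `S(K_{2,3})` with spectrum
`{λ₁, λ₂, λ₂, λ₂, λ₃}` (ordered multiplicity list `(1,3,1)`). -/
theorem k23_oml131_spectrally_arbitrary_SSP (l1 l2 l3 : ℝ)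
    (h12 : l1 < l2) (h23 : l2 < l3) :
    ∃ A : Matrix (Fin 5) (Fin 5) ℝ, InS bip23 A ∧ HasSSP A ∧
      multOf A l1 = 1 ∧ multOf A l2 = 3 ∧ multOf A l3 = 1 ∧
      ∀ t, t ≠ l1 → t ≠ l2 → t ≠ l3 → multOf A t = 0 := by
  obtain ⟨u₁, u₂, v₁, v₂, c, hp⟩ := K23Params.exists_of_pos (sub_pos.2 h12) (sub_pos.2 h23)
  have hxy := hp.dotProduct_eq_zero
  have hx := k23Vec_ne_zero u₁ u₂ hp.c_ne_zero
  have hy := k23Vec_ne_zero v₁ v₂ hp.c_ne_zero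
  have hl3 : l2 + k23Vec u₁ u₂ c ⬝ᵥ k23Vec u₁ u₂ c = l3 := by
    rw [hp.dotProduct_self_u]; ring
  have hl1 : l2 - k23Vec v₁ v₂ c ⬝ᵥ k23Vec v₁ v₂ c = l1 := by
    rw [hp.dotProduct_self_v]; ring
  refine ⟨_, hp.inS_bip23 l2, hp.hasSSP l2, ?_, ?_, ?_, fun t ht1 ht2 ht3 => ?_⟩
  · rw [← hl1]; exact multOf_rankTwoUpdate_sub_dotProduct_self hxy hy
  · rw [multOf_rankTwoUpdate_self hxy hx hy, Fintype.card_fin]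
  · rw [← hl3]; exact multOf_rankTwoUpdate_add_dotProduct_self hxy hx
  · exact multOf_rankTwoUpdate_eq_zero hxy ht2 (hl3 ▸ ht3) (hl1 ▸ ht1)
end

section
/- (Matrix Liberation Lemma, SSP case) Let G be a graph on vertices {1,…,n}, let A ∈ S(G), and let Ē = {(i,j) : i < j and ij is not an edge of G}. Let Ψ = Ver^S(A) be the |Ē| × C(n,2) matrix whose rows are indexed by Ē, columns indexed by pairs (k,l) with 1 ≤ k < l ≤ n, and whose ((i,j),(k,l))-entry is the (i,j)-entry of the commutator A K_{kl} − K_{kl} A, where K_{kl} = E_{kl} − E_{lk}. Suppose x ∈ ℝ^{Ē} is a vector in the column space of Ψ such that the rows of Ψ indexed by Ē ∖ supp(x) are linearly independent. Let H be the graph on {1,…,n} whose edges are the pairs ij with (i,j) ∈ supp(x). Then there exists a matrix A' ∈ S(G ∪ H) (where G ∪ H has edge set E(G) ∪ E(H)) such that A' has the Strong Spectral Property and A' has the same spectrum (with multiplicities) as A. -/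
open Matrix

/-- The skew-symmetric matrix `K_{kl} = E_{kl} - E_{lk}`. -/
def Kmat {n : ℕ} (k l : Fin n) : Matrix (Fin n) (Fin n) ℝ :=
  Matrix.single k l 1 - Matrix.single l k 1

/-!
Conjugating `A` by `exp S`, where `S = ∑ v_c K_c` is skew-symmetric, preserves symmetry and
spectrum and moves `A` to first order by `[S, A]`, whose `(i, j)` entry is `-(Ψ v)_(i,j)`.
Write `x = Ψ y`. Since the rows of `Ψ` on the zero set of `x` are independent, the implicit
function theorem gives a curve `v(t)` with `v'(0) = y` along which these entries stay zero.
The entries on `supp x` move with the nonzero speed `-x`, so they become nonzero, while the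
edges of `G` stay nonzero and the row independence persists for small `t`. For such a matrix the
zero entries above the diagonal index independent rows of its verification matrix, and this
forces the SSP.
-/

open NormedSpace Filter Topology

theorem HasStrictFDerivAt.exists_curve_of_mem_ker {E F : Type*} [NormedAddCommGroup E]
    [NormedSpace ℝ E] [CompleteSpace E] [NormedAddCommGroup F] [NormedSpace ℝ F]
    [FiniteDimensional ℝ F] {f : E → F} {f' : E →L[ℝ] F} {a : E} (hf : HasStrictFDerivAt f f' a)
    (hf' : f'.range = ⊤) {v : E} (hv : f' v = 0) :
    ∃ γ : ℝ → E, γ 0 = a ∧ HasDerivAt γ v 0 ∧ ∀ᶠ t in 𝓝 0, f (γ t) = f a := by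
  let w : ℝ →L[ℝ] f'.ker := (1 : ℝ →L[ℝ] ℝ).smulRight ⟨v, hv⟩
  refine ⟨fun t => hf.implicitFunction f f' hf' (f a) (w t), ?_, ?_, ?_⟩
  · simp [w]
  · simpa [w, Function.comp_def] using
      (hf.to_implicitFunction hf').hasFDerivAt.comp_hasDerivAt_of_eq (0 : ℝ) w.hasDerivAt (by simp)
  · have hw : Tendsto (fun t => (f a, w t)) (𝓝 0) (𝓝 (f a, 0)) := by
      simpa using (tendsto_const_nhds.prodMk_nhds (w.continuous.tendsto 0))
    exact hw.eventually (hf.map_implicitFunction_eq hf')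

section BanachAlgebra

variable {𝔸 : Type*} [NormedRing 𝔸] [NormedAlgebra ℝ 𝔸] [CompleteSpace 𝔸]

theorem hasStrictFDerivAt_exp_mul_mul_exp_neg (a : 𝔸) :
    HasStrictFDerivAt (fun x : 𝔸 => exp x * a * exp (-x))
      ((ContinuousLinearMap.mul ℝ 𝔸).flip a - ContinuousLinearMap.mul ℝ 𝔸 a) 0 := by
  have hexp : HasStrictFDerivAt (exp : 𝔸 → 𝔸) (1 : 𝔸 →L[ℝ] 𝔸) 0 := hasStrictFDerivAt_exp_zero
  have hexp_neg : HasStrictFDerivAt (fun x : 𝔸 => exp (-x)) (-1 : 𝔸 →L[ℝ] 𝔸) 0 := by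
    simpa using (neg_zero (G := 𝔸) ▸ hexp).comp (0 : 𝔸) (hasStrictFDerivAt_id (0 : 𝔸)).neg
  refine ((hexp.mul_const' a).mul' hexp_neg).congr_fderiv ?_
  ext b
  simp [neg_add_eq_sub]

end BanachAlgebra

section SquareMatrix

variable {m : Type*} [Fintype m] [DecidableEq m]

theorem multOf_mul_mul_of_mul_eq_one (A : Matrix m m ℝ) {Q Q' : Matrix m m ℝ} (h : Q' * Q = 1)
    (t : ℝ) : multOf (Q * A * Q') t = multOf A t := by
  have h' : Q * Q' = 1 := mul_eq_one_comm.mp h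
  let e : (m → ℝ) ≃ₗ[ℝ] (m → ℝ) := LinearEquiv.ofLinearMap Q'.mulVecLin Q.mulVecLin
    (by rw [← mulVecLin_mul, h, mulVecLin_one]) (by rw [← mulVecLin_mul, h', mulVecLin_one])
  have hker : LinearMap.ker (Q * A * Q' - t • 1).mulVecLin
      = (LinearMap.ker (A - t • 1).mulVecLin).comap (e : (m → ℝ) →ₗ[ℝ] (m → ℝ)) := by
    have hconj : Q * A * Q' - t • 1 = Q * (A - t • 1) * Q' := by
      rw [mul_sub, sub_mul, Matrix.mul_smul, mul_one, Matrix.smul_mul, h']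
    have hQ_inj : ∀ w, Q *ᵥ w = 0 ↔ w = 0 := fun w =>
      ⟨fun hw => by simpa [mulVec_mulVec, h] using congrArg (Q' *ᵥ ·) hw, fun hw => by simp [hw]⟩
    ext v
    simp [hconj, e, hQ_inj, -mulVec_mulVec]
  unfold multOf
  rw [hker, Submodule.comap_equiv_eq_map_symm, LinearEquiv.finrank_map_eq]

theorem multOf_exp_mul_mul_exp_neg (S A : Matrix m m ℝ) (t : ℝ) :
    multOf (exp S * A * exp (-S)) t = multOf A t :=
  multOf_mul_mul_of_mul_eq_one A (by
    rw [← Matrix.exp_add_of_commute _ _ (Commute.refl S).neg_left, neg_add_cancel, exp_zero]) t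

theorem isSymm_exp_mul_mul_exp_neg {A S : Matrix m m ℝ} (hA : A.IsSymm) (hS : Sᵀ = -S) :
    (exp S * A * exp (-S)).IsSymm := by
  rw [IsSymm, transpose_mul, transpose_mul, ← Matrix.exp_transpose, ← Matrix.exp_transpose,
    transpose_neg, hS, neg_neg, hA.eq, mul_assoc]

end SquareMatrix

theorem Matrix.range_mulVecLin_eq_top_of_linearIndependent_row {ι κ K : Type*} [Field K]
    [Fintype ι] [Fintype κ] {M : Matrix ι κ K} (hM : LinearIndependent K M.row) :
    LinearMap.range M.mulVecLin = ⊤ :=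
  Submodule.eq_top_of_finrank_eq <| by
    rw [Module.finrank_fintype_fun_eq_card]
    exact hM.rank_matrix

section UpperPairs

variable {n : ℕ}

abbrev UpperPair (n : ℕ) : Type := {p : Fin n × Fin n // p.1 < p.2}

theorem sum_eq_two_nsmul_sum_upperPair {M : Type*} [AddCommMonoid M] (F : Fin n → Fin n → M)
    (hF : ∀ i j, F j i = F i j) (hdiag : ∀ i, F i i = 0) :
    ∑ i, ∑ j, F i j = 2 • ∑ p : UpperPair n, F p.1.1 p.1.2 := by
  have hupper : ∑ p : UpperPair n, F p.1.1 p.1.2 = ∑ i, ∑ j, if i < j then F i j else 0 := by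
    rw [← Finset.sum_subtype (Finset.univ.filter fun p : Fin n × Fin n => p.1 < p.2) (by simp)
      (fun p => F p.1 p.2), Finset.sum_filter, Fintype.sum_prod_type]
  have hsplit : ∀ i j, F i j = (if i < j then F i j else 0) + (if j < i then F j i else 0) := by
    intro i j
    rcases lt_trichotomy i j with h | rfl | h
    · simp [h, h.not_gt]
    · simp [hdiag]
    · simp [h, h.not_gt, hF]
  calc ∑ i, ∑ j, F i j
      = ∑ i, ∑ j, (if i < j then F i j else 0) + ∑ i, ∑ j, (if j < i then F j i else 0) := by
        simp only [← Finset.sum_add_distrib, ← hsplit]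
    _ = 2 • ∑ p : UpperPair n, F p.1.1 p.1.2 := by
        rw [Finset.sum_comm (f := fun i j => if j < i then F j i else 0), hupper, two_nsmul]

theorem trace_mul_eq_two_mul_sum_upperPair {X M : Matrix (Fin n) (Fin n) ℝ} (hX : X.IsSymm)
    (hM : M.IsSymm) (hdiag : ∀ i, X i i = 0) :
    trace (X * M) = 2 * ∑ p : UpperPair n, X p.1.1 p.1.2 * M p.1.1 p.1.2 := by
  rw [two_mul, ← two_nsmul, ← sum_eq_two_nsmul_sum_upperPair (fun i j => X i j * M i j)
    (fun i j => by rw [hX.apply, hM.apply]) (fun i => by rw [hdiag, zero_mul])]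
  simp only [trace, diag_apply, mul_apply, hM.apply]

theorem Kmat_transpose (k l : Fin n) : (Kmat k l)ᵀ = -Kmat k l := by
  simp [Kmat, transpose_single]

/-- The verification matrix `Ver^S(A)` with rows indexed by all pairs `(i, j)`; the paper's
matrix is its restriction to the nonedges `i < j`. -/
def sspVerification (A : Matrix (Fin n) (Fin n) ℝ) : Matrix (Fin n × Fin n) (UpperPair n) ℝ :=
  of fun p c => (A * Kmat c.1.1 c.1.2 - Kmat c.1.1 c.1.2 * A) p.1 p.2

theorem hasSSP_of_linearIndependent_sspVerification {B : Matrix (Fin n) (Fin n) ℝ}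
    (hB : B.IsSymm) (hli : LinearIndependent ℝ
      fun p : {p : UpperPair n // B p.1.1 p.1.2 = 0} => sspVerification B p.1.1) :
    HasSSP B := by
  intro X hX hBX hIX hcomm
  have hdiag : ∀ i, X i i = 0 := fun i => by simpa using congrFun (congrFun hIX i) i
  have hsupp : ∀ i j, B i j ≠ 0 → X i j = 0 := fun i j hij => by
    simpa [hij] using congrFun (congrFun hBX i) j
  -- `X` is trace-orthogonal to every commutator `[B, K_c]`, and these are symmetric.
  have horth : ∀ c : UpperPair n,
      ∑ p : UpperPair n, X p.1.1 p.1.2 * sspVerification B p.1 c = 0 := by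
    intro c
    set K := Kmat c.1.1 c.1.2
    have hsymm : (B * K - K * B).IsSymm := by
      simp only [IsSymm, transpose_sub, transpose_mul, hB.eq, K, Kmat_transpose, neg_mul,
        mul_neg, sub_neg_eq_add, neg_add_eq_sub]
    have htrace : trace (X * (B * K - K * B)) = 0 := by
      rw [mul_sub, trace_sub, ← mul_assoc, ← mul_assoc, trace_mul_cycle X K B,
        (sub_eq_zero.mp hcomm), sub_self]
    simpa [trace_mul_eq_two_mul_sum_upperPair hX hsymm hdiag, sspVerification, K] using htrace
  have hzero : ∀ p : {p : UpperPair n // B p.1.1 p.1.2 = 0}, X p.1.1.1 p.1.1.2 = 0 := by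
    refine Fintype.linearIndependent_iff.mp hli (fun p => X p.1.1.1 p.1.1.2) (funext fun c => ?_)
    simp only [Finset.sum_apply, Pi.smul_apply, smul_eq_mul, Pi.zero_apply]
    have h := horth c
    rw [← Fintype.sum_subtype_add_sum_subtype (fun p : UpperPair n => B p.1.1 p.1.2 = 0),
      Fintype.sum_eq_zero (fun p : {p : UpperPair n // ¬B p.1.1 p.1.2 = 0} =>
        X p.1.1.1 p.1.1.2 * sspVerification B p.1.1 c) fun p => by rw [hsupp _ _ p.2, zero_mul],
      add_zero] at h
    exact h
  have hupper : ∀ i j, i < j → X i j = 0 := fun i j hij => by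
    by_cases h : B i j = 0
    · exact hzero ⟨⟨(i, j), hij⟩, h⟩
    · exact hsupp i j h
  ext i j
  rcases lt_trichotomy i j with h | rfl | h
  · exact hupper i j h
  · exact hdiag i
  · rw [← hX.apply]
    exact hupper j i h

end UpperPairs

section Liberation

-- Any submultiplicative norm would do; it is only used to differentiate `exp`.
attribute [local instance] Matrix.linftyOpNormedAddCommGroup Matrix.linftyOpNormedRing
  Matrix.linftyOpNormedAlgebra

variable {n : ℕ}

noncomputable def skewMatrix : (UpperPair n → ℝ) →L[ℝ] Matrix (Fin n) (Fin n) ℝ :=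
  (Fintype.linearCombination ℝ fun c : UpperPair n => Kmat c.1.1 c.1.2).toContinuousLinearMap

theorem skewMatrix_apply (v : UpperPair n → ℝ) :
    skewMatrix v = ∑ c, v c • Kmat c.1.1 c.1.2 :=
  Fintype.linearCombination_apply ..

theorem skewMatrix_transpose (v : UpperPair n → ℝ) : (skewMatrix v)ᵀ = -skewMatrix v := by
  simp [skewMatrix_apply, transpose_sum, Kmat_transpose]

theorem commutator_skewMatrix_apply (A : Matrix (Fin n) (Fin n) ℝ) (v : UpperPair n → ℝ)
    (i j : Fin n) :
    (skewMatrix v * A - A * skewMatrix v) i j = -(sspVerification A (i, j) ⬝ᵥ v) := by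
  simp only [skewMatrix_apply, Matrix.sum_mul, Matrix.mul_sum, Matrix.smul_mul, Matrix.mul_smul,
    Matrix.sub_apply, Matrix.sum_apply, Matrix.smul_apply, smul_eq_mul, sspVerification, of_apply,
    dotProduct, ← Finset.sum_sub_distrib, ← Finset.sum_neg_distrib]
  exact Finset.sum_congr rfl fun c _ => by ring

noncomputable def skewConj (A : Matrix (Fin n) (Fin n) ℝ) (v : UpperPair n → ℝ) :
    Matrix (Fin n) (Fin n) ℝ :=
  exp (skewMatrix v) * A * exp (-skewMatrix v)

theorem skewConj_zero (A : Matrix (Fin n) (Fin n) ℝ) : skewConj A 0 = A := by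
  simp [skewConj]

theorem hasStrictFDerivAt_skewConj (A : Matrix (Fin n) (Fin n) ℝ) :
    HasStrictFDerivAt (skewConj A)
      (((ContinuousLinearMap.mul ℝ _).flip A - ContinuousLinearMap.mul ℝ _ A).comp skewMatrix)
      0 := by
  have h := hasStrictFDerivAt_exp_mul_mul_exp_neg A
  rw [← map_zero (skewMatrix (n := n))] at h
  exact h.comp 0 skewMatrix.hasStrictFDerivAt

theorem exists_skewConj_curve (A : Matrix (Fin n) (Fin n) ℝ) {Z : Type*} [Fintype Z]
    (pos : Z → Fin n × Fin n) (hA : ∀ z, A (pos z).1 (pos z).2 = 0)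
    (hli : LinearIndependent ℝ fun z => sspVerification A (pos z))
    {y : UpperPair n → ℝ} (hy : ∀ z, sspVerification A (pos z) ⬝ᵥ y = 0) :
    ∃ u : ℝ → UpperPair n → ℝ, u 0 = 0 ∧
      (∀ i j, HasDerivAt (fun t => skewConj A (u t) i j)
        (-(sspVerification A (i, j) ⬝ᵥ y)) 0) ∧
      ∀ᶠ t in 𝓝 0, ∀ z, skewConj A (u t) (pos z).1 (pos z).2 = 0 := by
  let entries : Matrix (Fin n) (Fin n) ℝ →L[ℝ] (Z → ℝ) :=
    (LinearMap.pi fun z => entryLinearMap ℝ ℝ (pos z).1 (pos z).2).toContinuousLinearMap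
  have hentries : ∀ M z, entries M z = M (pos z).1 (pos z).2 := fun _ _ => rfl
  have hD := hasStrictFDerivAt_skewConj A
  set D := ((ContinuousLinearMap.mul ℝ _).flip A - ContinuousLinearMap.mul ℝ _ A).comp skewMatrix
  have hD_apply : ∀ v i j, D v i j = -(sspVerification A (i, j) ⬝ᵥ v) :=
    commutator_skewMatrix_apply A
  -- The linearized constraint map is `-Ψ_Z`, onto because its rows are independent.
  have hrange : (entries.comp D).range = ⊤ := by
    have : (entries.comp D : (UpperPair n → ℝ) →ₗ[ℝ] (Z → ℝ))
        = -(of fun z => sspVerification A (pos z)).mulVecLin := by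
      refine LinearMap.ext fun v => funext fun z => ?_
      change entries (D v) z = _
      rw [hentries, hD_apply]
      rfl
    rw [this, LinearMap.range_neg]
    exact range_mulVecLin_eq_top_of_linearIndependent_row hli
  obtain ⟨u, hu0, hu, hfu⟩ := (entries.hasStrictFDerivAt.comp 0 hD).exists_curve_of_mem_ker
    hrange (v := y) <| funext fun z => by
      change entries (D y) z = 0
      rw [hentries, hD_apply, hy z, neg_zero]
  refine ⟨u, hu0, fun i j => ?_, ?_⟩
  · have := ((entryLinearMap ℝ ℝ i j).toContinuousLinearMap.hasFDerivAt.comp 0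
      hD.hasFDerivAt).comp_hasDerivAt_of_eq 0 hu hu0.symm
    exact this.congr_deriv (hD_apply y i j)
  · filter_upwards [hfu] with t ht z
    simpa [hentries, skewConj_zero, hA] using congrFun ht z

end Liberation

section Pattern

variable {n : ℕ}

abbrev UpperNonEdge (G : SimpleGraph (Fin n)) : Type :=
  {p : Fin n × Fin n // p.1 < p.2 ∧ ¬G.Adj p.1 p.2}

def supportGraph {G : SimpleGraph (Fin n)} (x : UpperNonEdge G → ℝ) : SimpleGraph (Fin n) :=
  SimpleGraph.fromRel fun i j => ∃ e : UpperNonEdge G, e.val = (i, j) ∧ x e ≠ 0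

theorem supportGraph_adj_of_lt {G : SimpleGraph (Fin n)} (x : UpperNonEdge G → ℝ) {i j : Fin n}
    (hij : i < j) (hG : ¬G.Adj i j) : (supportGraph x).Adj i j ↔ x ⟨(i, j), hij, hG⟩ ≠ 0 := by
  simp only [supportGraph, SimpleGraph.fromRel_adj]
  constructor
  · rintro ⟨-, ⟨e, he, hx⟩ | ⟨e, he, -⟩⟩
    · obtain rfl : e = ⟨(i, j), hij, hG⟩ := Subtype.ext he
      exact hx
    · have hji : j < i := by simpa [he] using e.2.1
      exact absurd hji hij.not_gt
  · exact fun hx => ⟨hij.ne, Or.inl ⟨_, rfl, hx⟩⟩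

theorem inS_of_forall_lt {m : Type*} [Fintype m] [DecidableEq m] [LinearOrder m]
    {G : SimpleGraph m} {B : Matrix m m ℝ} (hB : B.IsSymm)
    (h : ∀ i j, i < j → (B i j ≠ 0 ↔ G.Adj i j)) : InS G B :=
  ⟨hB, fun i j hij => by
    rcases hij.lt_or_gt with hlt | hgt
    · exact h i j hlt
    · rw [← hB.apply, G.adj_comm]
      exact h j i hgt⟩

theorem inS_sup_supportGraph {G : SimpleGraph (Fin n)} {x : UpperNonEdge G → ℝ}
    {B : Matrix (Fin n) (Fin n) ℝ} (hB : B.IsSymm) (hG : ∀ i j, G.Adj i j → B i j ≠ 0)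
    (hsupp : ∀ e, x e ≠ 0 → B e.1.1 e.1.2 ≠ 0) (hzero : ∀ e, x e = 0 → B e.1.1 e.1.2 = 0) :
    InS (G ⊔ supportGraph x) B := by
  refine inS_of_forall_lt hB fun i j hij => ?_
  by_cases hGij : G.Adj i j
  · exact iff_of_true (hG i j hGij) (Or.inl hGij)
  rw [SimpleGraph.sup_adj, supportGraph_adj_of_lt x hij hGij, or_iff_right hGij]
  by_cases hx : x ⟨(i, j), hij, hGij⟩ = 0
  · exact iff_of_false (not_not.2 (hzero _ hx)) (not_not.2 hx)
  · exact iff_of_true (hsupp _ hx) hx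

theorem hasSSP_of_linearIndependent_supportGraph {G : SimpleGraph (Fin n)}
    {x : UpperNonEdge G → ℝ} {B : Matrix (Fin n) (Fin n) ℝ} (hB : B.IsSymm)
    (hG : ∀ i j, G.Adj i j → B i j ≠ 0) (hsupp : ∀ e, x e ≠ 0 → B e.1.1 e.1.2 ≠ 0)
    (hli : LinearIndependent ℝ fun e : {e // x e = 0} => sspVerification B e.1.1) :
    HasSSP B := by
  refine hasSSP_of_linearIndependent_sspVerification hB ?_
  let f : {p : UpperPair n // B p.1.1 p.1.2 = 0} → {e // x e = 0} := fun p =>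
    ⟨⟨p.1.1, p.1.2, fun h => hG _ _ h p.2⟩, by_contra fun hx => hsupp _ hx p.2⟩
  exact hli.comp f fun p q h => Subtype.ext (Subtype.ext (congrArg (fun e => e.1.1) h))

theorem eventually_linearIndependent_sspVerification {Z : Type*} [Finite Z]
    (pos : Z → Fin n × Fin n) {γ : ℝ → Matrix (Fin n) (Fin n) ℝ} {t₀ : ℝ}
    (hγ : ContinuousAt γ t₀) (h : LinearIndependent ℝ fun z => sspVerification (γ t₀) (pos z)) :
    ∀ᶠ t in 𝓝 t₀, LinearIndependent ℝ fun z => sspVerification (γ t) (pos z) := by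
  have hcont : Continuous fun B : Matrix (Fin n) (Fin n) ℝ => fun z => sspVerification B (pos z) :=
    by
    unfold sspVerification
    fun_prop
  exact (hcont.continuousAt.comp hγ).eventually h.eventually

end Pattern

/-- Matrix Liberation Lemma (SSP case): let `A ∈ S(G)` and let `Ψ` be the SSP
verification matrix of `A`, with rows indexed by the nonedges `(i,j)`, `i < j`,
of `G`, columns indexed by pairs `(k,l)`, `k < l`, and entries the `(i,j)`-entry
of `A K_{kl} - K_{kl} A`.  If `x` is in the column space of `Ψ` and the rows of
`Ψ` indexed by the complement of `supp x` are linearly independent, then `A` can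
be perturbed to an SSP matrix `A' ∈ S(G ∪ H)` with the same spectrum as `A`,
where `H` has as edges the support of `x`. -/
theorem matrix_liberation_SSP {n : ℕ} (G : SimpleGraph (Fin n))
    (A : Matrix (Fin n) (Fin n) ℝ) (hA : InS G A)
    (x : {p : Fin n × Fin n // p.1 < p.2 ∧ ¬ G.Adj p.1 p.2} → ℝ)
    (Ψ : Matrix {p : Fin n × Fin n // p.1 < p.2 ∧ ¬ G.Adj p.1 p.2}
          {p : Fin n × Fin n // p.1 < p.2} ℝ)
    (hΨ : ∀ e c, Ψ e c =
      (A * Kmat c.val.1 c.val.2 - Kmat c.val.1 c.val.2 * A) e.val.1 e.val.2)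
    (hx : ∃ y, x = Ψ.mulVec y)
    (hind : LinearIndependent ℝ
      (fun r : {e : {p : Fin n × Fin n // p.1 < p.2 ∧ ¬ G.Adj p.1 p.2} // x e = 0} =>
        Ψ r.val)) :
    ∃ A' : Matrix (Fin n) (Fin n) ℝ,
      InS (G ⊔ SimpleGraph.fromRel fun i j =>
        ∃ e : {p : Fin n × Fin n // p.1 < p.2 ∧ ¬ G.Adj p.1 p.2},
          e.val = (i, j) ∧ x e ≠ 0) A' ∧
      HasSSP A' ∧ ∀ t : ℝ, multOf A' t = multOf A t := by
  classical
  obtain ⟨y, rfl⟩ := hx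
  let Z := {e // (Ψ *ᵥ y) e = 0}
  have hrow : ∀ e, Ψ e = sspVerification A e.1 := fun e => funext (hΨ e)
  have hA0 : ∀ e : UpperNonEdge G, A e.1.1 e.1.2 = 0 := fun e =>
    not_not.1 fun h => e.2.2 ((hA.2 _ _ e.2.1.ne).1 h)
  obtain ⟨u, hu0, hderiv, hzero⟩ := exists_skewConj_curve A (fun z : Z => z.1.1)
    (fun z => hA0 z.1) (by simpa only [hrow] using hind)
    (fun z => by simpa [mulVec, hrow] using z.2)
  set γ := fun t => skewConj A (u t)
  have hγ0 : γ 0 = A := by simp only [γ, hu0, skewConj_zero]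
  have hsupp : ∀ᶠ t in 𝓝[≠] 0, ∀ e : {e // (Ψ *ᵥ y) e ≠ 0}, γ t e.1.1.1 e.1.1.2 ≠ 0 :=
    eventually_all.2 fun e => (hderiv _ _).eventually_ne (by simpa [mulVec, hrow] using e.2)
  have hG : ∀ᶠ t in 𝓝 0, ∀ q : {q : Fin n × Fin n // G.Adj q.1 q.2}, γ t q.1.1 q.1.2 ≠ 0 :=
    eventually_all.2 fun q => (hderiv _ _).continuousAt.eventually_ne (by
      simpa [γ, hu0, skewConj_zero] using (hA.2 _ _ (G.ne_of_adj q.2)).2 q.2)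
  have hli : ∀ᶠ t in 𝓝 0, LinearIndependent ℝ fun z : Z => sspVerification (γ t) z.1.1 :=
    eventually_linearIndependent_sspVerification _
      (continuousAt_pi.2 fun i => continuousAt_pi.2 fun j => (hderiv i j).continuousAt)
      (by simpa only [hγ0, hrow] using hind)
  obtain ⟨t, ⟨htzero, htG, htli⟩, htsupp⟩ :=
    ((hzero.and (hG.and hli)).filter_mono nhdsWithin_le_nhds |>.and hsupp).exists
  have hsymm : (γ t).IsSymm := isSymm_exp_mul_mul_exp_neg hA.1 (skewMatrix_transpose _)
  have hGt : ∀ i j, G.Adj i j → γ t i j ≠ 0 := fun i j h => htG ⟨(i, j), h⟩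
  have hsuppt : ∀ e, (Ψ *ᵥ y) e ≠ 0 → γ t e.1.1 e.1.2 ≠ 0 := fun e h => htsupp ⟨e, h⟩
  exact ⟨γ t, inS_sup_supportGraph hsymm hGt hsuppt fun e h => htzero ⟨e, h⟩,
    hasSSP_of_linearIndependent_supportGraph hsymm hGt hsuppt htli, multOf_exp_mul_mul_exp_neg _ A⟩
end

section
/- Let H be the graph on vertices {1,…,12} with the 18 edges {1,2}, {2,3}, {3,4}, {4,5}, {5,6}, {1,6}, {1,7}, {4,7}, {2,8}, {5,8}, {3,9}, {6,9}, {7,10}, {8,11}, {9,12}, {10,11}, {10,12}, {11,12}. If A ∈ S(H) has ordered multiplicity list (3,5,4) (that is, A has exactly three distinct eigenvalues λ₁ < λ₂ < λ₃ with multiplicities 3, 5, 4 respectively), then A does not have the Strong Spectral Property. -/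
open Matrix

/-- The graph `H` on 12 vertices (here `{0, …, 11}`) with the 18 edges
`{1,2}, {2,3}, {3,4}, {4,5}, {5,6}, {1,6}, {1,7}, {4,7}, {2,8}, {5,8}, {3,9},
{6,9}, {7,10}, {8,11}, {9,12}, {10,11}, {10,12}, {11,12}` (1-indexed). -/
def graphH12 : SimpleGraph (Fin 12) :=
  SimpleGraph.fromRel fun i j =>
    (i.val, j.val) ∈ [(0,1), (1,2), (2,3), (3,4), (4,5), (0,5),
      (0,6), (3,6), (1,7), (4,7), (2,8), (5,8),
      (6,9), (7,10), (8,11), (9,10), (9,11), (10,11)]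

/-!
The symmetric matrices commuting with `A` contain `B Z Bᵀ` for every symmetric block-diagonal `Z`,
where the columns of `B` are bases of the eigenspaces of `A`; hence they form a space of dimension
at least `∑ mᵢ(mᵢ+1)/2 = 6 + 15 + 10 = 31`. The conditions `A ∘ X = O`, `I ∘ X = O` on a symmetric
`X` are one linear condition per diagonal entry and per edge, `12 + 18 = 30` in all, so some
nonzero `X` satisfies them and commutes with `A`.
-/

open Module Matrix

namespace Matrix

variable {n K : Type*} [Fintype n] [Field K]

def symmCommutant (A : Matrix n n K) : Submodule K (Matrix n n K) where
  carrier := {X | X.IsSymm ∧ A * X = X * A}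
  add_mem' := by
    rintro X Y ⟨hX, hAX⟩ ⟨hY, hAY⟩
    exact ⟨hX.add hY, by rw [mul_add, add_mul, hAX, hAY]⟩
  zero_mem' := ⟨isSymm_zero, by rw [mul_zero, zero_mul]⟩
  smul_mem' := by
    rintro c X ⟨hX, hAX⟩
    exact ⟨hX.smul c, by rw [Matrix.mul_smul, Matrix.smul_mul, hAX]⟩

theorem exists_mul_eq_one_of_mulVec_injective [DecidableEq n] {κ : Type*} [Fintype κ]
    [DecidableEq κ] {B : Matrix n κ K} (hB : Function.Injective B.mulVec) :
    ∃ L : Matrix κ n K, L * B = 1 := by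
  obtain ⟨g, hg⟩ := B.mulVecLin.exists_leftInverse_of_injective (LinearMap.ker_eq_bot.mpr hB)
  refine ⟨LinearMap.toMatrix' g, ?_⟩
  rw [← LinearMap.toMatrix'_toLin' B, ← LinearMap.toMatrix'_comp, Matrix.toLin'_apply', hg,
    LinearMap.toMatrix'_id]

theorem mul_mul_transpose_mem_symmCommutant {κ : Type*} [Fintype κ]
    {A : Matrix n n K} {D Z : Matrix κ κ K} {B : Matrix n κ K} (hA : A.IsSymm) (hD : D.IsSymm)
    (hAB : A * B = B * D) (hZ : Z ∈ symmCommutant D) : B * Z * Bᵀ ∈ symmCommutant A := by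
  obtain ⟨hZ, hDZ⟩ := hZ
  have hBA : Bᵀ * A = D * Bᵀ := by
    rw [← hA.eq, ← transpose_mul, hAB, transpose_mul, hD.eq]
  refine ⟨by rw [IsSymm, transpose_mul, transpose_mul, transpose_transpose, hZ.eq,
    Matrix.mul_assoc], ?_⟩
  calc A * (B * Z * Bᵀ) = B * (D * Z) * Bᵀ := by simp only [← Matrix.mul_assoc, hAB]
    _ = B * Z * (D * Bᵀ) := by rw [hDZ]; simp only [Matrix.mul_assoc]
    _ = B * Z * Bᵀ * A := by rw [← hBA]; simp only [Matrix.mul_assoc]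

theorem finrank_symmCommutant_le_of_mul_eq_mul [DecidableEq n] {κ : Type*} [Fintype κ]
    [DecidableEq κ] {A : Matrix n n K} {D : Matrix κ κ K} {B : Matrix n κ K} (hA : A.IsSymm)
    (hD : D.IsSymm) (hB : Function.Injective B.mulVec) (hAB : A * B = B * D) :
    finrank K (symmCommutant D) ≤ finrank K (symmCommutant A) := by
  obtain ⟨L, hL⟩ := exists_mul_eq_one_of_mulVec_injective hB
  have hcancel (Y : Matrix κ κ K) : L * (B * Y * Bᵀ) * Lᵀ = Y := by
    simp only [Matrix.mul_assoc, hL, ← transpose_mul, transpose_one, Matrix.mul_one,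
      ← Matrix.mul_assoc L B, Matrix.one_mul]
  let conj : symmCommutant D →ₗ[K] symmCommutant A :=
    { toFun := fun Z =>
        ⟨B * (Z : Matrix κ κ K) * Bᵀ, mul_mul_transpose_mem_symmCommutant hA hD hAB Z.2⟩
      map_add' := fun Z W => by ext1; simp [Matrix.mul_add, Matrix.add_mul]
      map_smul' := fun c Z => by ext1; simp }
  refine LinearMap.finrank_le_finrank_of_injective (f := conj) fun Z W hZW => Subtype.ext ?_
  rw [← hcancel Z, ← hcancel W]
  exact congrArg (fun Y : symmCommutant A => L * (Y : Matrix n n K) * Lᵀ) hZW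

theorem sum_choose_le_finrank_symmCommutant_diagonal {ι : Type*} [Fintype ι] [DecidableEq ι]
    (d : ι → ℕ) (μ : ι → K) :
    ∑ i, (d i + 1).choose 2 ≤
      finrank K (symmCommutant (diagonal fun p : Σ i, Fin (d i) => μ p.1)) := by
  let blocks : (Π i, Sym2 (Fin (d i)) → K) →ₗ[K] Matrix (Σ i, Fin (d i)) (Σ i, Fin (d i)) K :=
    { toFun := fun f => blockDiagonal' fun i => of fun a b => f i s(a, b)
      map_add' := fun f g => by
        ext ⟨i, a⟩ ⟨j, b⟩
        simp only [blockDiagonal'_apply, Pi.add_apply, of_apply, add_apply]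
        split_ifs <;> simp
      map_smul' := fun c f => by ext ⟨i, a⟩ ⟨j, b⟩; simp [blockDiagonal'_apply] }
  have hmem (f) : blocks f ∈ symmCommutant (diagonal fun p : Σ i, Fin (d i) => μ p.1) := by
    refine ⟨?_, ?_⟩
    · simp only [IsSymm, blocks, LinearMap.coe_mk, AddHom.coe_mk, blockDiagonal'_transpose]
      congr! 1 with i
      ext a b
      simp [Sym2.eq_swap]
    · ext p q
      rw [diagonal_mul, mul_diagonal]
      by_cases hpq : p.1 = q.1
      · rw [hpq, mul_comm]
      · simp [blocks, blockDiagonal'_apply_ne _ _ _ hpq]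
  have hinj : Function.Injective blocks := by
    intro f g hfg
    simp only [blocks, LinearMap.coe_mk, AddHom.coe_mk, blockDiagonal'_inj] at hfg
    funext i s
    induction s using Sym2.ind with
    | h a b => exact congrFun₂ (congrFun hfg i) a b
  have := LinearMap.finrank_le_finrank_of_injective (f := blocks.codRestrict _ hmem)
    (fun f g h => hinj (congrArg Subtype.val h))
  simpa [Module.finrank_pi_fintype, Sym2.card] using this

end Matrix

theorem mulVec_eq_smul_of_mem_ker {n : Type*} [Fintype n] [DecidableEq n] {A : Matrix n n ℝ}
    {μ : ℝ} {v : n → ℝ} (hv : v ∈ LinearMap.ker (A - μ • (1 : Matrix n n ℝ)).mulVecLin) :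
    A *ᵥ v = μ • v := by
  rwa [LinearMap.mem_ker, mulVecLin_apply, sub_mulVec, smul_mulVec, one_mulVec, sub_eq_zero] at hv

theorem exists_eigenvector_matrix {n ι : Type*} [Fintype n] [DecidableEq n] [Fintype ι]
    [DecidableEq ι] (A : Matrix n n ℝ) {μ : ι → ℝ} (hμ : Function.Injective μ) :
    ∃ B : Matrix n (Σ i, Fin (multOf A (μ i))) ℝ,
      Function.Injective B.mulVec ∧
        A * B = B * diagonal fun p : Σ i, Fin (multOf A (μ i)) => μ p.1 := by
  let E (i : ι) : Submodule ℝ (n → ℝ) := LinearMap.ker (A - μ i • (1 : Matrix n n ℝ)).mulVecLin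
  have hE : E = fun i => Module.End.eigenspace (toLin' A) (μ i) := by
    ext i v
    simp [E, sub_eq_zero]
  let b (i : ι) : Basis (Fin (multOf A (μ i))) ℝ (E i) :=
    finBasisOfFinrankEq ℝ (E i) (by unfold multOf; rfl)
  let w (i : ι) (a : Fin (multOf A (μ i))) : n → ℝ := b i a
  let B : Matrix n (Σ i, Fin (multOf A (μ i))) ℝ := of fun r p => w p.1 p.2 r
  refine ⟨B, mulVec_injective_iff.mpr ?_, ?_⟩
  · have hw (i : ι) : LinearIndependent ℝ (w i) :=
      (b i).linearIndependent.map' (E i).subtype (E i).ker_subtype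
    refine linearIndependent_iUnion_finite hw fun i t _ hi => ?_
    have hspan (j : ι) : Submodule.span ℝ (Set.range (w j)) ≤ E j :=
      Submodule.span_le.mpr (Set.range_subset_iff.mpr fun a => (b j a).2)
    have hindep : iSupIndep E := hE ▸ (Module.End.eigenspaces_iSupIndep (toLin' A)).comp hμ
    exact (hindep.disjoint_biSup hi).mono (hspan i) (iSup₂_mono fun j _ => hspan j)
  · refine Matrix.ext fun r p => ?_
    rw [mul_diagonal, mul_comm]
    exact congrFun (mulVec_eq_smul_of_mem_ker (b p.1 p.2).2) r

theorem sum_choose_le_finrank_symmCommutant {n ι : Type*} [Fintype n] [DecidableEq n] [Fintype ι]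
    [DecidableEq ι] {A : Matrix n n ℝ} (hA : A.IsSymm) {μ : ι → ℝ} (hμ : Function.Injective μ) :
    ∑ i, (multOf A (μ i) + 1).choose 2 ≤ finrank ℝ (symmCommutant A) := by
  obtain ⟨B, hB, hAB⟩ := exists_eigenvector_matrix A hμ
  exact (sum_choose_le_finrank_symmCommutant_diagonal _ μ).trans
    (finrank_symmCommutant_le_of_mul_eq_mul hA (isSymm_diagonal _) hB hAB)

theorem not_hasSSP_of_card_lt_finrank {n : Type*} [Fintype n] [DecidableEq n] [LinearOrder n]
    {G : SimpleGraph n} [DecidableRel G.Adj] {A : Matrix n n ℝ} (hA : InS G A)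
    (hcard : Fintype.card {p : n × n // p.1 ≤ p.2 ∧ (p.1 = p.2 ∨ G.Adj p.1 p.2)} <
      finrank ℝ (symmCommutant A)) :
    ¬ HasSSP A := by
  intro hSSP
  let restrict :
      symmCommutant A →ₗ[ℝ] {p : n × n // p.1 ≤ p.2 ∧ (p.1 = p.2 ∨ G.Adj p.1 p.2)} → ℝ :=
    { toFun := fun X p => (X : Matrix n n ℝ) p.1.1 p.1.2
      map_add' := fun _ _ => rfl
      map_smul' := fun _ _ => rfl }
  have hker : LinearMap.ker restrict ≠ ⊥ :=
    LinearMap.ker_ne_bot_of_finrank_lt (by rwa [finrank_fintype_fun_eq_card])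
  obtain ⟨⟨X, hXsymm, hXcomm⟩, hXker, hX0⟩ := (Submodule.ne_bot_iff _).mp hker
  have hvanish : ∀ i j, i = j ∨ G.Adj i j → X i j = 0 := by
    intro i j hij
    rcases le_total i j with hle | hle
    · exact congrFun hXker ⟨(i, j), hle, hij⟩
    · rw [← hXsymm.apply i j]
      exact congrFun hXker ⟨(j, i), hle, hij.imp Eq.symm fun h => h.symm⟩
  refine hX0 (Subtype.ext (hSSP X hXsymm ?_ ?_ (sub_eq_zero.mpr hXcomm)))
  · ext i j
    by_cases hij : i = j
    · simp [hvanish i j (.inl hij)]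
    · by_cases hAij : A i j = 0
      · simp [hAij]
      · simp [hvanish i j (.inr ((hA.2 i j hij).mp hAij))]
  · ext i j
    by_cases hij : i = j
    · simp [hvanish i j (.inl hij)]
    · simp [hij]

instance : DecidableRel graphH12.Adj := fun i j =>
  inferInstanceAs (Decidable (i ≠ j ∧ (_ ∨ _)))

theorem graphH12_oml354_not_SSP_general (A : Matrix (Fin 12) (Fin 12) ℝ)
    (hA : InS graphH12 A) (l1 l2 l3 : ℝ) (h12 : l1 < l2) (h23 : l2 < l3)
    (m1 : multOf A l1 = 3) (m2 : multOf A l2 = 5) (m3 : multOf A l3 = 4) :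
    ¬ HasSSP A := by
  have hinj : Function.Injective ![l1, l2, l3] := by
    intro i j h
    fin_cases i <;> fin_cases j <;> simp at h ⊢ <;> linarith
  have hdim := sum_choose_le_finrank_symmCommutant hA.1 hinj
  simp only [Fin.sum_univ_three, Matrix.cons_val, m1, m2, m3] at hdim
  refine not_hasSSP_of_card_lt_finrank hA (lt_of_lt_of_le ?_ hdim)
  rw [Fintype.card_subtype]
  decide

/-- If `A ∈ S(H)` has ordered multiplicity list `(3,5,4)`, then `A` does not
have the SSP. -/
theorem graphH12_oml354_not_SSP (A : Matrix (Fin 12) (Fin 12) ℝ)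
    (hA : InS graphH12 A) (l1 l2 l3 : ℝ) (h12 : l1 < l2) (h23 : l2 < l3)
    (m1 : multOf A l1 = 3) (m2 : multOf A l2 = 5) (m3 : multOf A l3 = 4)
    (hothers : ∀ t, t ≠ l1 → t ≠ l2 → t ≠ l3 → multOf A t = 0) :
    ¬ HasSSP A :=
  graphH12_oml354_not_SSP_general A hA l1 l2 l3 h12 h23 m1 m2 m3
end
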